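/- arXiv:1910.14468 — 3 statements merged into one kernel-verified Lean document; each statement's English description precedes it below -/
import Mathlib

section
/- On the round $n$-sphere $S^n\subset\mathbb{R}^{n+1}$ with constant sectional curvature one, for every positive integer $k$ and every first spherical harmonic $x$ (the restriction of a linear coordinate on $\mathbb{R}^{n+1}$), the GJMS operators satisfy $[L_{2k}, x] = k\big((n+2k-2)x - 2\mathcal{L}_X\big)\circ L_{2k-2}$, where $X = \nabla x$ is the gradient of $x$ on $S^n$, $\mathcal{L}_X$ is the derivative along $X$, and $x$ denotes multiplication by $x$. -/
/-!
Functions on the round sphere `S^n ⊂ ℝ^{n+1}` (sectional curvature one) are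
represented by their 0-homogeneous extensions to `ℝ^{n+1} \ {0}`.  For such an
extension `u`, the Euclidean Laplacian evaluated on the unit sphere is the
Laplace–Beltrami operator of the round metric applied to `u|_{S^n}`.
-/

noncomputable section

open scoped RealInnerProductSpace

abbrev Euc (n : ℕ) := EuclideanSpace ℝ (Fin (n + 1))

/-- Radial projection to the unit sphere. -/
def sphProj {n : ℕ} (y : Euc n) : Euc n := ‖y‖⁻¹ • y

/-- `u` is (the 0-homogeneous extension of) a smooth function on `S^n`:
smooth away from the origin and invariant under positive dilations. -/
def IsSphFun {n : ℕ} (u : Euc n → ℝ) : Prop :=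
  ContDiffOn ℝ (⊤ : ℕ∞) u {y | y ≠ 0} ∧ ∀ c : ℝ, 0 < c → ∀ y, u (c • y) = u y

def pd {n : ℕ} (i : Fin (n + 1)) (f : Euc n → ℝ) : Euc n → ℝ :=
  fun y => fderiv ℝ f y (EuclideanSpace.single i 1)

/-- Euclidean Laplacian on `ℝ^{n+1}`. -/
def eucLap {n : ℕ} (f : Euc n → ℝ) : Euc n → ℝ :=
  fun y => ∑ i, pd i (pd i f) y

/-- The Laplace–Beltrami operator of the round sphere, acting on 0-homogeneous
extensions (and extended 0-homogeneously). -/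
def sLap {n : ℕ} (f : Euc n → ℝ) : Euc n → ℝ :=
  fun y => eucLap f (sphProj y)

/-- `|∇ u|²` on the sphere (for 0-homogeneous `u` the spherical gradient on the
unit sphere is the Euclidean gradient of the extension). -/
def sGrad2 {n : ℕ} (u : Euc n → ℝ) : Euc n → ℝ :=
  fun y => ∑ i, (pd i u (sphProj y)) ^ 2

/-- `⟨∇ x, ∇ u⟩` on the sphere: the derivative of `u` along the spherical
gradient of `x`. -/
def sGradPair {n : ℕ} (x u : Euc n → ℝ) : Euc n → ℝ :=
  fun y => ∑ i, pd i x (sphProj y) * pd i u (sphProj y)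

/-- The i-th coordinate function of `ℝ^{n+1}` restricted to the sphere
(a first spherical harmonic), extended 0-homogeneously. -/
def sCoord {n : ℕ} (i : Fin (n + 1)) : Euc n → ℝ :=
  fun y => sphProj y i

/-- The GJMS operator `L_{2k} = ∏_{j=1}^k (-Δ + (n-2j)(n+2j-2)/4)` on the round
`n`-sphere; `L_0 = id`. -/
def gjms (n : ℕ) : ℕ → (Euc n → ℝ) → Euc n → ℝ
  | 0, u => u
  | k + 1, u => fun y =>
      -(sLap (gjms n k u) y) +
        (((n : ℝ) - 2 * (k + 1)) * ((n : ℝ) + 2 * (k + 1) - 2) / 4) * gjms n k u y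

namespace Aux
variable {n : ℕ}
def Om (n : ℕ) : Set (Euc n) := {y | y ≠ 0}
lemma isOpen_Om : IsOpen (Om n) := isOpen_compl_singleton
def ee (i : Fin (n + 1)) : Euc n := EuclideanSpace.single i 1

def Sm (f : Euc n → ℝ) : Prop := ContDiffOn ℝ (⊤ : ℕ∞) f (Om n)

lemma mem_Om {y : Euc n} (hy : y ≠ 0) : y ∈ Om n := hy

lemma sm_contDiffAt {f : Euc n → ℝ} (hf : Sm f) {y : Euc n} (hy : y ≠ 0) :
    ContDiffAt ℝ (⊤ : ℕ∞) f y :=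
  ContDiffOn.contDiffAt hf (isOpen_Om.mem_nhds hy)

lemma sm_diffAt {f : Euc n → ℝ} (hf : Sm f) {y : Euc n} (hy : y ≠ 0) :
    DifferentiableAt ℝ f y :=
  (sm_contDiffAt hf hy).differentiableAt (by simp)

lemma sm_pd {f : Euc n → ℝ} (hf : Sm f) (i : Fin (n + 1)) : Sm (pd i f) := by
  have h1 : ContDiffOn ℝ (⊤ : ℕ∞) (fderiv ℝ f) (Om n) :=
    hf.fderiv_of_isOpen isOpen_Om (by exact_mod_cast le_top)
  have h2 := (ContinuousLinearMap.apply ℝ ℝ (ee i)).contDiff.comp_contDiffOn h1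
  exact h2

lemma sm_add {f g : Euc n → ℝ} (hf : Sm f) (hg : Sm g) : Sm (fun y => f y + g y) :=
  ContDiffOn.add hf hg
lemma sm_mul {f g : Euc n → ℝ} (hf : Sm f) (hg : Sm g) : Sm (fun y => f y * g y) :=
  ContDiffOn.mul hf hg
lemma sm_const_mul {f : Euc n → ℝ} (hf : Sm f) (a : ℝ) : Sm (fun y => a * f y) :=
  ContDiffOn.mul contDiffOn_const hf
lemma sm_sum {ι : Type*} {s : Finset ι} {F : ι → Euc n → ℝ} (hF : ∀ j ∈ s, Sm (F j)) :
    Sm (fun y => ∑ j ∈ s, F j y) := ContDiffOn.sum hF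
lemma sm_neg {f : Euc n → ℝ} (hf : Sm f) : Sm (fun y => -(f y)) := ContDiffOn.neg hf
lemma sm_clm (ℓ : Euc n →L[ℝ] ℝ) : Sm (fun y : Euc n => ℓ y) :=
  (ℓ.contDiff).contDiffOn
lemma sm_congr {f g : Euc n → ℝ} (hf : Sm f) (h : ∀ z : Euc n, z ≠ 0 → g z = f z) : Sm g :=
  ContDiffOn.congr hf h

-- locality of pd
lemma eventuallyEq_of_eqOn {f g : Euc n → ℝ} (h : ∀ z : Euc n, z ≠ 0 → f z = g z)
    {y : Euc n} (hy : y ≠ 0) : f =ᶠ[nhds y] g := by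
  filter_upwards [isOpen_Om.mem_nhds (mem_Om hy)] with z hz using h z hz

lemma pd_congr {f g : Euc n → ℝ} (h : ∀ z : Euc n, z ≠ 0 → f z = g z)
    {y : Euc n} (hy : y ≠ 0) (i : Fin (n + 1)) : pd i f y = pd i g y := by
  rw [pd, pd, (eventuallyEq_of_eqOn h hy).fderiv_eq]

-- pointwise pd algebra
lemma pd_eq_of_hasFDerivAt' {f : Euc n → ℝ} {L : Euc n →L[ℝ] ℝ} {y : Euc n} {i : Fin (n+1)}
    (h : HasFDerivAt f L y) : pd i f y = L (ee i) := by
  rw [pd, h.fderiv]; rfl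

lemma pd_mul {f g : Euc n → ℝ} {y : Euc n} (hf : DifferentiableAt ℝ f y)
    (hg : DifferentiableAt ℝ g y) (i : Fin (n + 1)) :
    pd i (fun z => f z * g z) y = pd i f y * g y + f y * pd i g y := by
  rw [pd_eq_of_hasFDerivAt' (hf.hasFDerivAt.fun_mul hg.hasFDerivAt)]
  simp [pd, ee]
  ring

lemma pd_add {f g : Euc n → ℝ} {y : Euc n} (hf : DifferentiableAt ℝ f y)
    (hg : DifferentiableAt ℝ g y) (i : Fin (n + 1)) :
    pd i (fun z => f z + g z) y = pd i f y + pd i g y := by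
  rw [pd_eq_of_hasFDerivAt' (hf.hasFDerivAt.fun_add hg.hasFDerivAt)]
  simp [pd, ee]

lemma pd_const_mul {f : Euc n → ℝ} {y : Euc n} (hf : DifferentiableAt ℝ f y) (a : ℝ)
    (i : Fin (n + 1)) :
    pd i (fun z => a * f z) y = a * pd i f y := by
  rw [pd_eq_of_hasFDerivAt' (hf.hasFDerivAt.const_mul a)]
  simp [pd, ee]

lemma pd_sum {ι : Type*} {s : Finset ι} {F : ι → Euc n → ℝ} {y : Euc n}
    (hF : ∀ j ∈ s, DifferentiableAt ℝ (F j) y) (i : Fin (n + 1)) :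
    pd i (fun z => ∑ j ∈ s, F j z) y = ∑ j ∈ s, pd i (F j) y := by
  rw [pd_eq_of_hasFDerivAt' (HasFDerivAt.fun_sum (fun j hj => (hF j hj).hasFDerivAt))]
  simp [pd, ee]

lemma pd_clm (ℓ : Euc n →L[ℝ] ℝ) (y : Euc n) (i : Fin (n + 1)) :
    pd i (fun z : Euc n => ℓ z) y = ℓ (ee i) := by
  rw [pd_eq_of_hasFDerivAt' (ℓ.hasFDerivAt)]

lemma pd_coord (j : Fin (n + 1)) (y : Euc n) (i : Fin (n + 1)) :
    pd i (fun z : Euc n => z j) y = ee i j := by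
  have := pd_clm (PiLp.proj (𝕜 := ℝ) 2 (fun _ : Fin (n+1) => ℝ) j) y i
  simpa using this

-- decomposition of vectors
lemma decomp (y : Euc n) : y = ∑ i, y i • ee i := by
  ext j
  have : (∑ i, y i • ee i) j = ∑ i, (y i • ee i) j := by
    rw [WithLp.ofLp_sum]; exact Finset.sum_apply j Finset.univ _
  rw [this]
  simp [ee, EuclideanSpace.single_apply]

lemma clm_decomp (ℓ : Euc n →L[ℝ] ℝ) (y : Euc n) : ℓ y = ∑ i, y i * ℓ (ee i) := by
  conv_lhs => rw [decomp y]
  rw [map_sum]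
  simp

-- homogeneity
def Hm (d : ℤ) (f : Euc n → ℝ) : Prop :=
  ∀ c : ℝ, 0 < c → ∀ y : Euc n, y ≠ 0 → f (c • y) = c ^ d * f y

lemma hm_mul {d e : ℤ} {f g : Euc n → ℝ} (hf : Hm d f) (hg : Hm e g) :
    Hm (d + e) (fun y => f y * g y) := by
  intro c hc y hy
  dsimp only
  rw [hf c hc y hy, hg c hc y hy, zpow_add₀ hc.ne']
  ring

lemma hm_add {d : ℤ} {f g : Euc n → ℝ} (hf : Hm d f) (hg : Hm d g) :
    Hm d (fun y => f y + g y) := by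
  intro c hc y hy; dsimp only; rw [hf c hc y hy, hg c hc y hy]; ring

lemma hm_const_mul {d : ℤ} {f : Euc n → ℝ} (hf : Hm d f) (a : ℝ) :
    Hm d (fun y => a * f y) := by
  intro c hc y hy; dsimp only; rw [hf c hc y hy]; ring

lemma hm_sum {d : ℤ} {ι : Type*} {s : Finset ι} {F : ι → Euc n → ℝ}
    (hF : ∀ j ∈ s, Hm d (F j)) : Hm d (fun y => ∑ j ∈ s, F j y) := by
  intro c hc y hy
  rw [Finset.mul_sum]
  exact Finset.sum_congr rfl fun j hj => hF j hj c hc y hy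

lemma hm_congr {d : ℤ} {f g : Euc n → ℝ} (hf : Hm d f)
    (h : ∀ z : Euc n, z ≠ 0 → g z = f z) : Hm d g := by
  intro c hc y hy
  have hcy : c • y ≠ 0 := smul_ne_zero hc.ne' hy
  rw [h _ hcy, h _ hy, hf c hc y hy]

lemma hm_pd {d : ℤ} {f : Euc n → ℝ} (hf : Hm d f) (hsm : Sm f) (i : Fin (n + 1)) :
    Hm (d - 1) (pd i f) := by
  intro c hc y hy
  have hcy : c • y ≠ 0 := smul_ne_zero hc.ne' hy
  -- chain rule for z ↦ f (c • z)
  have hmap : HasFDerivAt (fun z : Euc n => c • z) (c • ContinuousLinearMap.id ℝ (Euc n)) y := by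
    exact (hasFDerivAt_id y).const_smul c
  have h1 : HasFDerivAt (fun z : Euc n => f (c • z))
      ((fderiv ℝ f (c • y)).comp (c • ContinuousLinearMap.id ℝ (Euc n))) y :=
    ((sm_diffAt hsm hcy).hasFDerivAt).comp y hmap
  have h2 : pd i (fun z : Euc n => f (c • z)) y = c * pd i f (c • y) := by
    rw [pd_eq_of_hasFDerivAt' h1]
    simp [pd, ee]
  have h3 : pd i (fun z : Euc n => f (c • z)) y = c ^ d * pd i f y := by
    have heq : ∀ z : Euc n, z ≠ 0 → (fun z : Euc n => f (c • z)) z = (fun z => c ^ d * f z) z :=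
      fun z hz => hf c hc z hz
    rw [pd_congr heq hy i, pd_const_mul (sm_diffAt hsm hy) _ i]
  have : c * pd i f (c • y) = c ^ d * pd i f y := by rw [← h2, h3]
  have hccc : pd i f (c • y) = c⁻¹ * (c ^ d * pd i f y) := by
    field_simp at this ⊢
    linarith [this]
  rw [hccc, zpow_sub_one₀ hc.ne']
  ring

lemma euler {d : ℤ} {f : Euc n → ℝ} (hf : Hm d f) (hsm : Sm f) {y : Euc n} (hy : y ≠ 0) :
    ∑ i, y i * pd i f y = d * f y := by
  have hdiff := sm_diffAt hsm hy
  have hγ : HasDerivAt (fun c : ℝ => c • y) ((1 : ℝ) • y) 1 := (hasDerivAt_id 1).smul_const y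
  have hd1 : HasFDerivAt f (fderiv ℝ f y) ((1:ℝ) • y) := by rw [one_smul]; exact hdiff.hasFDerivAt
  have h1 : HasDerivAt (fun c : ℝ => f (c • y)) (fderiv ℝ f y y) 1 := by
    have := hd1.comp_hasDerivAt 1 hγ
    rw [one_smul] at this; exact this
  have h2 : (fun c : ℝ => f (c • y)) =ᶠ[nhds (1 : ℝ)] fun c => c ^ d * f y := by
    filter_upwards [isOpen_Ioi.mem_nhds (by norm_num : (0:ℝ) < 1)] with c hc
    exact hf c hc y hy
  have h3 : HasDerivAt (fun c : ℝ => c ^ d * f y) (fderiv ℝ f y y) 1 :=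
    h1.congr_of_eventuallyEq h2.symm
  have h4 : HasDerivAt (fun c : ℝ => c ^ d * f y) ((d * (1:ℝ) ^ (d - 1)) * f y) 1 :=
    (hasDerivAt_zpow d 1 (Or.inl one_ne_zero)).mul_const (f y)
  have h5 : fderiv ℝ f y y = d * f y := by
    have := h3.unique h4
    simpa using this
  have h6 : fderiv ℝ f y (∑ i, y i • ee i) = ∑ i, y i * pd i f y := by
    rw [map_sum]
    exact Finset.sum_congr rfl fun i _ => by simp [pd, ee]
  rw [← h6, ← decomp y]
  exact h5

-- Schwarz symmetry
lemma pd_comm {f : Euc n → ℝ} (hf : Sm f) {y : Euc n} (hy : y ≠ 0) (i j : Fin (n + 1)) :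
    pd i (pd j f) y = pd j (pd i f) y := by
  have hAt : ContDiffAt ℝ (⊤ : ℕ∞) f y := sm_contDiffAt hf hy
  have hsym : IsSymmSndFDerivAt ℝ f y := by
    apply ContDiffAt.isSymmSndFDerivAt (n := ((⊤ : ℕ∞) : WithTop ℕ∞)) hAt
    rw [minSmoothness_of_isRCLikeNormedField]; exact WithTop.coe_le_coe.2 (le_top : (2 : ℕ∞) ≤ ⊤)
  have hd' : DifferentiableAt ℝ (fderiv ℝ f) y := by
    have : ContDiffAt ℝ (1 : ℕ∞) (fderiv ℝ f) y :=
      hAt.fderiv_right (by exact_mod_cast le_top)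
    exact this.differentiableAt (by simp)
  have key : ∀ a b : Fin (n + 1), pd a (pd b f) y = fderiv ℝ (fderiv ℝ f) y (ee a) (ee b) := by
    intro a b
    have h1 : HasFDerivAt (fun z => (ContinuousLinearMap.apply ℝ ℝ (ee b)) (fderiv ℝ f z))
        ((ContinuousLinearMap.apply ℝ ℝ (ee b)).comp (fderiv ℝ (fderiv ℝ f) y)) y :=
      ((ContinuousLinearMap.apply ℝ ℝ (ee b)).hasFDerivAt).comp y hd'.hasFDerivAt
    have h2 : pd a (pd b f) y =
        ((ContinuousLinearMap.apply ℝ ℝ (ee b)).comp (fderiv ℝ (fderiv ℝ f) y)) (ee a) := by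
      exact pd_eq_of_hasFDerivAt' h1
    simpa using h2
  rw [key i j, key j i]
  exact hsym (ee i) (ee j)

lemma pd_pd_comm_fun {f : Euc n → ℝ} (hf : Sm f) {y : Euc n} (hy : y ≠ 0) (i j : Fin (n + 1)) :
    pd j (pd j (pd i f)) y = pd i (pd j (pd j f)) y := by
  have e1 : pd j (pd j (pd i f)) y = pd j (pd i (pd j f)) y := by
    exact pd_congr (fun z hz => pd_comm hf hz j i) hy j
  rw [e1]
  exact pd_comm (sm_pd hf j) hy j i
def q (y : Euc n) : ℝ := ‖y‖ ^ 2

lemma q_pos {y : Euc n} (hy : y ≠ 0) : 0 < q y := by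
  simpa [q] using pow_pos (norm_pos_iff.2 hy) 2

def rr (m : ℤ) : Euc n → ℝ := fun y => q y ^ ((m : ℝ) / 2)

lemma rr_mul {y : Euc n} (hy : y ≠ 0) (a b : ℤ) : rr a y * rr b y = rr (a + b) y := by
  rw [rr, rr, rr, ← Real.rpow_add (q_pos hy)]
  norm_num
  ring_nf

lemma rr_two {y : Euc n} : rr 2 y = q y := by
  rw [rr]; norm_num

lemma rr_of_norm_one {y : Euc n} (hy : ‖y‖ = 1) (m : ℤ) : rr m y = 1 := by
  rw [rr, q, hy]; simp

-- derivative of q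
lemma hasFDerivAt_q (y : Euc n) :
    HasFDerivAt q ((2 : ℝ) • (innerSL ℝ y)) y := by
  have h := (hasFDerivAt_id y).norm_sq
  have : ((2:ℕ) • (innerSL ℝ y)) = ((2 : ℝ) • (innerSL ℝ y)) := by
    ext v; simp [two_smul]
  rw [← this]
  simp only [id_eq, ContinuousLinearMap.comp_id] at h; exact h

lemma pd_eq_of_hasFDerivAt {f : Euc n → ℝ} {L : Euc n →L[ℝ] ℝ} {y : Euc n} {i : Fin (n+1)}
    (h : HasFDerivAt f L y) : pd i f y = L (ee i) := by
  rw [pd, h.fderiv]; rfl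

lemma innerSL_ee (y : Euc n) (i : Fin (n + 1)) : (innerSL ℝ y) (ee i) = y i := by
  simp [ee, EuclideanSpace.inner_single_right]

lemma hasFDerivAt_rr {y : Euc n} (hy : y ≠ 0) (m : ℤ) :
    HasFDerivAt (rr m) ((((m : ℝ) / 2) * q y ^ ((m : ℝ) / 2 - 1)) • ((2 : ℝ) • (innerSL ℝ y))) y := by
  exact (hasFDerivAt_q y).rpow_const (Or.inl (q_pos hy).ne')

lemma pd_rr {y : Euc n} (hy : y ≠ 0) (m : ℤ) (i : Fin (n + 1)) :
    pd i (rr m) y = (m : ℝ) * (y i * rr (m - 2) y) := by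
  rw [pd_eq_of_hasFDerivAt (hasFDerivAt_rr hy m)]
  rw [ContinuousLinearMap.smul_apply, ContinuousLinearMap.smul_apply, innerSL_ee]
  rw [rr]
  push_cast
  rw [show ((m:ℝ) - 2) / 2 = (m : ℝ) / 2 - 1 by ring]
  simp only [smul_eq_mul]
  ring

lemma diff_rr {y : Euc n} (hy : y ≠ 0) (m : ℤ) : DifferentiableAt ℝ (rr m) y :=
  (hasFDerivAt_rr hy m).differentiableAt

lemma sm_rr (m : ℤ) : ContDiffOn ℝ (⊤ : ℕ∞) (rr m) (Om n) := by
  intro y hy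
  apply ContDiffAt.contDiffWithinAt
  exact (contDiff_norm_sq ℝ (E := Euc n)).contDiffAt.rpow_const_of_ne (q_pos hy).ne'

-- ρ homogeneity and misc
lemma q_smul (c : ℝ) (y : Euc n) : q (c • y) = c ^ 2 * q y := by
  rw [q, q, norm_smul, mul_pow, Real.norm_eq_abs, sq_abs]

lemma hm_rr (m : ℤ) : Hm m (rr (n := n) m) := by
  intro c hc y hy
  rw [rr, rr, q_smul, Real.mul_rpow (by positivity) (q_pos hy).le]
  congr 1
  rw [← Real.rpow_natCast c 2, ← Real.rpow_mul hc.le, ← Real.rpow_intCast c m,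
    show ((2:ℕ):ℝ) * ((m:ℝ)/2) = (m:ℝ) by push_cast; ring]

lemma hm_clm (ℓ : Euc n →L[ℝ] ℝ) : Hm 1 (fun y => ℓ y) := by
  intro c hc y hy
  dsimp only
  rw [map_smul]
  simp

lemma rr_zero (y : Euc n) : rr 0 y = 1 := by
  rw [rr]; norm_num

lemma sum_ly (ℓ : Euc n →L[ℝ] ℝ) (y : Euc n) : ∑ i, ℓ (ee i) * y i = ℓ y := by
  rw [clm_decomp ℓ y]
  exact Finset.sum_congr rfl fun i _ => mul_comm _ _

lemma sum_yy (y : Euc n) : ∑ i, y i * y i = q y := by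
  have h := EuclideanSpace.norm_eq y
  have h2 : q y = ∑ i, ‖y i‖ ^ 2 := by
    rw [q, h, Real.sq_sqrt (by positivity)]
  rw [h2]
  exact (Finset.sum_congr rfl fun i _ => by rw [Real.norm_eq_abs, sq_abs, sq]).symm

lemma ee_self (i : Fin (n + 1)) : ee (n := n) i i = 1 := by
  simp [ee, EuclideanSpace.single_apply]

-- the basic objects
variable (ℓ : Euc n →L[ℝ] ℝ)

def xf : Euc n → ℝ := fun y => ℓ y * rr (-1) y

def Af (f : Euc n → ℝ) : Euc n → ℝ := fun y => ∑ i, ℓ (ee i) * pd i f y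

def Sg (f : Euc n → ℝ) : Euc n → ℝ := fun y => rr 1 y * Af ℓ f y

def Lop (f : Euc n → ℝ) : Euc n → ℝ := fun y => rr 2 y * eucLap f y

def Good (f : Euc n → ℝ) : Prop := Sm f ∧ Hm 0 f

variable {ℓ}

lemma sm_eucLap {f : Euc n → ℝ} (hf : Sm f) : Sm (eucLap f) :=
  sm_sum fun j _ => sm_pd (sm_pd hf j) j

lemma hm_eucLap {f : Euc n → ℝ} (hf : Good f) : Hm (-2) (eucLap f) := by
  have h : Hm (0 - 1 - 1) (eucLap (n := n) f) :=
    hm_sum fun i _ => hm_pd (hm_pd hf.2 hf.1 i) (sm_pd hf.1 i) i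
  rwa [show (0:ℤ) - 1 - 1 = -2 by norm_num] at h

lemma good_lop {f : Euc n → ℝ} (hf : Good f) : Good (Lop f) := by
  constructor
  · exact sm_mul (sm_rr 2) (sm_eucLap hf.1)
  · have h : Hm (2 + -2) (Lop (n := n) f) := hm_mul (hm_rr 2) (hm_eucLap hf)
    rwa [show (2:ℤ) + -2 = 0 by norm_num] at h

lemma sm_af {f : Euc n → ℝ} (hf : Sm f) : Sm (Af ℓ f) :=
  sm_sum fun i _ => sm_const_mul (sm_pd hf i) _

lemma hm_af {f : Euc n → ℝ} (hf : Good f) : Hm (-1) (Af ℓ f) := by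
  have h : Hm (0 - 1) (Af ℓ (n := n) f) :=
    hm_sum fun i _ => hm_const_mul (hm_pd hf.2 hf.1 i) _
  rwa [show (0:ℤ) - 1 = -1 by norm_num] at h

lemma good_sg {f : Euc n → ℝ} (hf : Good f) : Good (Sg ℓ f) := by
  constructor
  · exact sm_mul (sm_rr 1) (sm_af hf.1)
  · have h : Hm (1 + -1) (Sg ℓ (n := n) f) := hm_mul (hm_rr 1) (hm_af hf)
    rwa [show (1:ℤ) + -1 = 0 by norm_num] at h

lemma good_xf : Good (xf ℓ (n := n)) := by
  constructor
  · exact sm_mul (sm_clm ℓ) (sm_rr (-1))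
  · have h : Hm (1 + -1) (xf ℓ (n := n)) := hm_mul (hm_clm ℓ) (hm_rr (-1))
    rwa [show (1:ℤ) + -1 = 0 by norm_num] at h

lemma good_xmul {f : Euc n → ℝ} (hf : Good f) : Good (fun z => xf ℓ z * f z) := by
  constructor
  · exact sm_mul (good_xf.1) hf.1
  · have h : Hm (0 + 0) (fun z => xf ℓ (n := n) z * f z) := hm_mul good_xf.2 hf.2
    rwa [show (0:ℤ) + 0 = 0 by norm_num] at h

-- first derivative of xf
lemma pd_xf {z : Euc n} (hz : z ≠ 0) (i : Fin (n + 1)) :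
    pd i (xf ℓ) z = ℓ (ee i) * rr (-1) z + ℓ z * (-1 * (z i * rr (-3) z)) := by
  show pd i (fun y => ℓ y * rr (-1) y) z = _
  rw [pd_mul (ℓ.differentiableAt) (diff_rr hz (-1)) i, pd_clm, pd_rr hz (-1) i]
  norm_num

-- E1
lemma grad_pair {f : Euc n → ℝ} (hf : Good f) {y : Euc n} (hy : y ≠ 0) :
    ∑ i, pd i (xf ℓ) y * pd i f y = rr (-1) y * Af ℓ f y := by
  have h1 : ∀ i ∈ Finset.univ, pd i (xf ℓ) y * pd i f y =
      rr (-1) y * (ℓ (ee i) * pd i f y) + (-(ℓ y * rr (-3) y)) * (y i * pd i f y) := by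
    intro i _
    rw [pd_xf hy i]
    ring
  rw [Finset.sum_congr rfl h1, Finset.sum_add_distrib, ← Finset.mul_sum, ← Finset.mul_sum]
  have h2 : ∑ i, y i * pd i f y = 0 := by
    have := euler hf.2 hf.1 hy
    simpa using this
  rw [h2, Af]
  ring

-- second derivative Leibniz, pointwise
lemma pd2_mul {f g : Euc n → ℝ} (hf : Sm f) (hg : Sm g) {y : Euc n} (hy : y ≠ 0)
    (i : Fin (n + 1)) :
    pd i (pd i (fun z => f z * g z)) y =
      pd i (pd i f) y * g y + 2 * (pd i f y * pd i g y) + f y * pd i (pd i g) y := by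
  have h1 : ∀ z : Euc n, z ≠ 0 → pd i (fun z => f z * g z) z =
      (fun z => pd i f z * g z + f z * pd i g z) z :=
    fun z hz => pd_mul (sm_diffAt hf hz) (sm_diffAt hg hz) i
  rw [pd_congr h1 hy i,
    pd_add ((sm_diffAt (sm_pd hf i) hy).fun_mul (sm_diffAt hg hy))
      ((sm_diffAt hf hy).fun_mul (sm_diffAt (sm_pd hg i) hy)) i,
    pd_mul (sm_diffAt (sm_pd hf i) hy) (sm_diffAt hg hy) i,
    pd_mul (sm_diffAt hf hy) (sm_diffAt (sm_pd hg i) hy) i]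
  ring

lemma eucLap_mul {f g : Euc n → ℝ} (hf : Sm f) (hg : Sm g) {y : Euc n} (hy : y ≠ 0) :
    eucLap (fun z => f z * g z) y =
      eucLap f y * g y + 2 * (∑ i, pd i f y * pd i g y) + f y * eucLap g y := by
  rw [eucLap, Finset.sum_congr rfl (fun i _ => pd2_mul hf hg hy i),
    Finset.sum_add_distrib, Finset.sum_add_distrib, ← Finset.sum_mul, ← Finset.mul_sum,
    ← Finset.mul_sum]
  rfl
lemma diff_coord {y : Euc n} (i : Fin (n + 1)) :
    DifferentiableAt ℝ (fun z : Euc n => z i) y :=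
  (PiLp.proj (𝕜 := ℝ) 2 (fun _ : Fin (n+1) => ℝ) i).differentiableAt

lemma pd_coord' (j : Fin (n + 1)) (y : Euc n) : pd j (fun z : Euc n => z j) y = 1 := by
  rw [pd_coord j y j, ee_self]

lemma sum_const' (c : ℝ) : ∑ _i : Fin (n + 1), c = ((n : ℝ) + 1) * c := by
  rw [Finset.sum_const, Finset.card_univ, Fintype.card_fin, nsmul_eq_mul]
  push_cast
  ring

lemma eucLap_xf {y : Euc n} (hy : y ≠ 0) :
    eucLap (xf ℓ) y = -(n:ℝ) * (ℓ y * rr (-3) y) := by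
  have hdG : ∀ (i : Fin (n+1)), DifferentiableAt ℝ (fun z : Euc n => z i * rr (-3) z) y :=
    fun i => (diff_coord i).mul (diff_rr hy (-3))
  have hterm : ∀ i ∈ Finset.univ, pd i (pd i (xf ℓ)) y =
      (-2 * rr (-3) y) * (ℓ (ee i) * y i) + (3 * (ℓ y * rr (-5) y)) * (y i * y i)
        + (-(ℓ y * rr (-3) y)) := by
    intro i _
    have hcongr : ∀ z : Euc n, z ≠ 0 → pd i (xf ℓ) z =
        (fun z => ℓ (ee i) * rr (-1) z + ℓ z * (-1 * (z i * rr (-3) z))) z :=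
      fun z hz => pd_xf hz i
    rw [pd_congr hcongr hy i,
      pd_add ((diff_rr hy (-1)).const_mul _)
        (ℓ.differentiableAt.fun_mul ((hdG i).const_mul (-1))) i,
      pd_const_mul (diff_rr hy (-1)) _ i, pd_rr hy (-1) i,
      pd_mul ℓ.differentiableAt ((hdG i).const_mul (-1)) i,
      pd_clm, pd_const_mul (hdG i) (-1) i,
      pd_mul (diff_coord i) (diff_rr hy (-3)) i, pd_coord' i, pd_rr hy (-3) i]
    rw [show (-1:ℤ) - 2 = -3 by norm_num, show (-3:ℤ) - 2 = -5 by norm_num]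
    ring
  rw [eucLap, Finset.sum_congr rfl hterm, Finset.sum_add_distrib, Finset.sum_add_distrib,
    ← Finset.mul_sum, ← Finset.mul_sum, sum_ly, sum_yy, sum_const']
  have h5 : rr (-5) y * q y = rr (-3) y := by
    rw [← rr_two (y := y), rr_mul hy]; norm_num
  linear_combination (3 * (ℓ y)) * h5

lemma lop_xf {y : Euc n} (hy : y ≠ 0) : Lop (xf ℓ) y = -(n:ℝ) * xf ℓ y := by
  rw [Lop, eucLap_xf hy, xf]
  have h1 : rr 2 y * rr (-3) y = rr (-1) y := by rw [rr_mul hy]; norm_num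
  linear_combination (-(n:ℝ) * ℓ y) * h1

-- E4 : Leibniz for Lop and multiplication by xf
lemma lop_xmul {f : Euc n → ℝ} (hf : Good f) {y : Euc n} (hy : y ≠ 0) :
    Lop (fun z => xf ℓ z * f z) y =
      xf ℓ y * Lop f y + 2 * Sg ℓ f y + (-(n:ℝ)) * (xf ℓ y * f y) := by
  rw [Lop, eucLap_mul good_xf.1 hf.1 hy, grad_pair hf hy, eucLap_xf hy]
  have h1 : rr 2 y * rr (-3) y = rr (-1) y := by rw [rr_mul hy]; norm_num
  have h2 : rr 2 y * rr (-1) y = rr 1 y := by rw [rr_mul hy]; norm_num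
  simp only [xf, Sg, Lop]
  linear_combination ((-(n:ℝ)) * ℓ y * f y) * h1 + (2 * Af ℓ f y) * h2

-- congruence lemmas
lemma eucLap_congr {f g : Euc n → ℝ} (h : ∀ z : Euc n, z ≠ 0 → f z = g z)
    {y : Euc n} (hy : y ≠ 0) : eucLap f y = eucLap g y := by
  rw [eucLap, eucLap]
  refine Finset.sum_congr rfl fun i _ => ?_
  exact pd_congr (fun z hz => pd_congr h hz i) hy i

lemma lop_congr {f g : Euc n → ℝ} (h : ∀ z : Euc n, z ≠ 0 → f z = g z)
    {y : Euc n} (hy : y ≠ 0) : Lop f y = Lop g y := by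
  rw [Lop, Lop, eucLap_congr h hy]

lemma af_congr {f g : Euc n → ℝ} (h : ∀ z : Euc n, z ≠ 0 → f z = g z)
    {y : Euc n} (hy : y ≠ 0) : Af ℓ f y = Af ℓ g y := by
  rw [Af, Af]
  exact Finset.sum_congr rfl fun i _ => by rw [pd_congr h hy i]

-- linearity
lemma eucLap_lin {f g : Euc n → ℝ} (hf : Sm f) (hg : Sm g) (a b : ℝ) {y : Euc n} (hy : y ≠ 0) :
    eucLap (fun z => a * f z + b * g z) y = a * eucLap f y + b * eucLap g y := by
  rw [eucLap, eucLap, eucLap]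
  rw [Finset.mul_sum, Finset.mul_sum, ← Finset.sum_add_distrib]
  refine Finset.sum_congr rfl fun i _ => ?_
  have h1 : ∀ z : Euc n, z ≠ 0 → pd i (fun z => a * f z + b * g z) z =
      (fun z => a * pd i f z + b * pd i g z) z := by
    intro z hz
    rw [pd_add ((sm_diffAt hf hz).const_mul a) ((sm_diffAt hg hz).const_mul b) i,
      pd_const_mul (sm_diffAt hf hz) a i, pd_const_mul (sm_diffAt hg hz) b i]
  rw [pd_congr h1 hy i,
    pd_add ((sm_diffAt (sm_pd hf i) hy).const_mul a) ((sm_diffAt (sm_pd hg i) hy).const_mul b) i,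
    pd_const_mul (sm_diffAt (sm_pd hf i) hy) a i, pd_const_mul (sm_diffAt (sm_pd hg i) hy) b i]

lemma lop_lin {f g : Euc n → ℝ} (hf : Sm f) (hg : Sm g) (a b : ℝ) {y : Euc n} (hy : y ≠ 0) :
    Lop (fun z => a * f z + b * g z) y = a * Lop f y + b * Lop g y := by
  rw [Lop, Lop, Lop, eucLap_lin hf hg a b hy]
  ring

lemma af_lin {f g : Euc n → ℝ} (hf : Sm f) (hg : Sm g) (a b : ℝ) {y : Euc n} (hy : y ≠ 0) :
    Af ℓ (fun z => a * f z + b * g z) y = a * Af ℓ f y + b * Af ℓ g y := by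
  rw [Af, Af, Af, Finset.mul_sum, Finset.mul_sum, ← Finset.sum_add_distrib]
  refine Finset.sum_congr rfl fun i _ => ?_
  rw [pd_add ((sm_diffAt hf hy).const_mul a) ((sm_diffAt hg hy).const_mul b) i,
    pd_const_mul (sm_diffAt hf hy) a i, pd_const_mul (sm_diffAt hg hy) b i]
  ring
lemma Af_def (f : Euc n → ℝ) : Af ℓ f = fun y => ∑ i, ℓ (ee i) * pd i f y := rfl
lemma Sg_def (f : Euc n → ℝ) : Sg ℓ f = fun y => rr 1 y * Af ℓ f y := rfl
lemma Lop_def (f : Euc n → ℝ) : Lop (n := n) f = fun y => rr 2 y * eucLap f y := rfl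
lemma eucLap_def (f : Euc n → ℝ) : eucLap (n := n) f = fun y => ∑ i, pd i (pd i f) y := rfl

-- A commutes with the Euclidean Laplacian
lemma eucLap_af {f : Euc n → ℝ} (hf : Sm f) {y : Euc n} (hy : y ≠ 0) :
    eucLap (Af ℓ f) y = Af ℓ (eucLap f) y := by
  have hAfun : ∀ (j : Fin (n+1)) (z : Euc n), z ≠ 0 → pd j (Af ℓ f) z =
      (fun z => ∑ i, ℓ (ee i) * pd j (pd i f) z) z := by
    intro j z hz
    rw [Af_def, pd_sum (F := fun i z => ℓ (ee i) * pd i f z)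
      (fun i _ => (sm_diffAt (sm_pd hf i) hz).const_mul _) j]
    exact Finset.sum_congr rfl fun i _ => pd_const_mul (sm_diffAt (sm_pd hf i) hz) _ j
  have hmain : ∀ j : Fin (n+1), pd j (pd j (Af ℓ f)) y =
      ∑ i, ℓ (ee i) * pd j (pd j (pd i f)) y := by
    intro j
    rw [pd_congr (hAfun j) hy j,
      pd_sum (F := fun i z => ℓ (ee i) * pd j (pd i f) z)
        (fun i _ => (sm_diffAt (sm_pd (sm_pd hf i) j) hy).const_mul _) j]
    exact Finset.sum_congr rfl fun i _ =>
      pd_const_mul (sm_diffAt (sm_pd (sm_pd hf i) j) hy) _ j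
  rw [eucLap, Finset.sum_congr rfl (fun j _ => hmain j), Finset.sum_comm, Af_def]
  refine Finset.sum_congr rfl fun i _ => ?_
  rw [← Finset.mul_sum]
  congr 1
  have h2 : pd i (eucLap f) y = ∑ j, pd i (pd j (pd j f)) y := by
    rw [eucLap_def, pd_sum (F := fun j z => pd j (pd j f) z)
      (fun j _ => sm_diffAt (sm_pd (sm_pd hf j) j) hy) i]
  rw [h2]
  exact Finset.sum_congr rfl fun j _ => pd_pd_comm_fun hf hy i j

lemma af_lop {f : Euc n → ℝ} (hf : Sm f) {y : Euc n} (hy : y ≠ 0) :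
    Af ℓ (Lop f) y = 2 * (ℓ y * eucLap f y) + rr 2 y * Af ℓ (eucLap f) y := by
  have hterm : ∀ i ∈ Finset.univ, ℓ (ee i) * pd i (Lop f) y =
      (2 * eucLap f y) * (ℓ (ee i) * y i) + rr 2 y * (ℓ (ee i) * pd i (eucLap f) y) := by
    intro i _
    rw [Lop_def, pd_mul (diff_rr hy 2) (sm_diffAt (sm_eucLap hf) hy) i, pd_rr hy 2 i]
    rw [show (2:ℤ) - 2 = 0 by norm_num, rr_zero]
    ring
  have h0 : Af ℓ (Lop f) y = ∑ i, ℓ (ee i) * pd i (Lop f) y := rfl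
  rw [h0, Finset.sum_congr rfl hterm, Finset.sum_add_distrib, ← Finset.mul_sum,
    ← Finset.mul_sum, sum_ly]
  have h1 : Af ℓ (eucLap f) y = ∑ i, ℓ (ee i) * pd i (eucLap f) y := rfl
  rw [h1]
  ring

-- E5 : commutator of Lop with the directional derivative term
lemma lop_sg {f : Euc n → ℝ} (hf : Good f) {y : Euc n} (hy : y ≠ 0) :
    Lop (Sg ℓ f) y = rr 1 y * Af ℓ (Lop f) y - 2 * (xf ℓ y * Lop f y)
      + ((n:ℝ) - 2) * Sg ℓ f y := by
  have smB : Sm (Af ℓ f) := sm_af hf.1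
  have hmB : Hm (-1) (Af ℓ f) := hm_af hf
  have hstep1 : ∀ (i : Fin (n+1)) (z : Euc n), z ≠ 0 → pd i (Sg ℓ f) z =
      (fun z => z i * (rr (-1) z * Af ℓ f z) + rr 1 z * pd i (Af ℓ f) z) z := by
    intro i z hz
    rw [Sg_def, pd_mul (diff_rr hz 1) (sm_diffAt smB hz) i, pd_rr hz 1 i]
    rw [show (1:ℤ) - 2 = -1 by norm_num]
    ring
  have hstep2 : ∀ i ∈ Finset.univ, pd i (pd i (Sg ℓ f)) y =
      (rr (-1) y * Af ℓ f y) + ((-(rr (-3) y * Af ℓ f y)) * (y i * y i)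
        + rr (-1) y * (y i * pd i (Af ℓ f) y))
      + (rr (-1) y * (y i * pd i (Af ℓ f) y) + rr 1 y * pd i (pd i (Af ℓ f)) y) := by
    intro i _
    have d1 : DifferentiableAt ℝ (fun z : Euc n => rr (-1) z * Af ℓ f z) y :=
      (diff_rr hy (-1)).mul (sm_diffAt smB hy)
    rw [pd_congr (hstep1 i) hy i,
      pd_add ((diff_coord i).fun_mul d1) ((diff_rr hy 1).fun_mul (sm_diffAt (sm_pd smB i) hy)) i,
      pd_mul (diff_coord i) d1 i, pd_coord' i,
      pd_mul (diff_rr hy (-1)) (sm_diffAt smB hy) i, pd_rr hy (-1) i,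
      pd_mul (diff_rr hy 1) (sm_diffAt (sm_pd smB i) hy) i, pd_rr hy 1 i]
    rw [show (-1:ℤ) - 2 = -3 by norm_num, show (1:ℤ) - 2 = -1 by norm_num]
    ring
  have heuler : ∑ i, y i * pd i (Af ℓ f) y = -(Af ℓ f y) := by
    have h := euler hmB smB hy
    rw [h]
    push_cast
    ring
  have hlapSg : eucLap (Sg ℓ f) y =
      ((n:ℝ) - 2) * (rr (-1) y * Af ℓ f y) + rr 1 y * eucLap (Af ℓ f) y := by
    rw [eucLap, Finset.sum_congr rfl hstep2]
    simp only [Finset.sum_add_distrib, ← Finset.mul_sum, Finset.sum_const, Finset.card_univ,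
      Fintype.card_fin, nsmul_eq_mul]
    rw [sum_yy, heuler]
    have h3 : rr (-3) y * q y = rr (-1) y := by
      rw [← rr_two (y := y), rr_mul hy]; norm_num
    have h4 : eucLap (Af ℓ f) y = ∑ i, pd i (pd i (Af ℓ f)) y := rfl
    rw [h4]
    push_cast
    linear_combination (-(Af ℓ f y)) * h3
  have hlapB : eucLap (Af ℓ f) y = Af ℓ (eucLap f) y := eucLap_af hf.1 hy
  have haf : Af ℓ (Lop f) y = 2 * (ℓ y * eucLap f y) + rr 2 y * Af ℓ (eucLap f) y :=
    af_lop hf.1 hy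
  have hL : Lop (Sg ℓ f) y = rr 2 y * eucLap (Sg ℓ f) y := rfl
  have hLf : Lop f y = rr 2 y * eucLap f y := rfl
  have hS : Sg ℓ f y = rr 1 y * Af ℓ f y := rfl
  have hX : xf ℓ y = ℓ y * rr (-1) y := rfl
  rw [hL, hlapSg, hlapB, haf, hLf, hS, hX]
  have h1 : rr 2 y * rr (-1) y = rr 1 y := by rw [rr_mul hy]; norm_num
  linear_combination (((n:ℝ) - 2) * Af ℓ f y + 2 * (ℓ y * eucLap f y)) * h1
-- extra linearity lemmas
lemma eucLap_add {f g : Euc n → ℝ} (hf : Sm f) (hg : Sm g) {y : Euc n} (hy : y ≠ 0) :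
    eucLap (fun z => f z + g z) y = eucLap f y + eucLap g y := by
  rw [eucLap, eucLap, eucLap, ← Finset.sum_add_distrib]
  refine Finset.sum_congr rfl fun i _ => ?_
  have h1 : ∀ z : Euc n, z ≠ 0 → pd i (fun z => f z + g z) z =
      (fun z => pd i f z + pd i g z) z :=
    fun z hz => pd_add (sm_diffAt hf hz) (sm_diffAt hg hz) i
  rw [pd_congr h1 hy i, pd_add (sm_diffAt (sm_pd hf i) hy) (sm_diffAt (sm_pd hg i) hy) i]

lemma lop_lin3 {F G H : Euc n → ℝ} (hF : Sm F) (hG : Sm G) (hH : Sm H) (a b : ℝ)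
    {y : Euc n} (hy : y ≠ 0) :
    Lop (fun z => F z + (a * G z + b * H z)) y = Lop F y + (a * Lop G y + b * Lop H y) := by
  have h2 : Sm (fun z => a * G z + b * H z) := sm_add (sm_const_mul hG a) (sm_const_mul hH b)
  have h3 : Lop (fun z => F z + (a * G z + b * H z)) y =
      rr 2 y * eucLap (fun z => F z + (a * G z + b * H z)) y := rfl
  rw [h3, eucLap_add hF h2 hy, eucLap_lin hG hH a b hy]
  have h4 : Lop F y = rr 2 y * eucLap F y := rfl
  have h5 : Lop G y = rr 2 y * eucLap G y := rfl
  have h6 : Lop H y = rr 2 y * eucLap H y := rfl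
  rw [h4, h5, h6]
  ring

-- sphProj facts
lemma sphProj_smul {c : ℝ} (hc : 0 < c) (y : Euc n) : sphProj (c • y) = sphProj y := by
  rw [sphProj, sphProj, norm_smul, Real.norm_eq_abs, abs_of_pos hc, mul_inv, smul_smul]
  congr 1
  rw [mul_comm (c⁻¹) (‖y‖⁻¹), mul_assoc, inv_mul_cancel₀ hc.ne', mul_one]

lemma slap_eq_lop {f : Euc n → ℝ} (hf : Good f) {y : Euc n} (hy : y ≠ 0) :
    sLap f y = Lop f y := by
  have hc : 0 < ‖y‖⁻¹ := inv_pos.2 (norm_pos_iff.2 hy)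
  have h1 : sLap f y = eucLap f (‖y‖⁻¹ • y) := rfl
  rw [h1, hm_eucLap hf _ hc y hy]
  have h2 : (‖y‖⁻¹ : ℝ) ^ (-2 : ℤ) = rr 2 y := by
    rw [rr_two, q, zpow_neg, ← zpow_ofNat, inv_zpow, inv_inv]
    try norm_num
  rw [h2]
  rfl

lemma good_sLap {f : Euc n → ℝ} (hf : Good f) : Good (sLap f) := by
  constructor
  · exact sm_congr (good_lop hf).1 (fun z hz => slap_eq_lop hf hz)
  · intro c hc y hy
    have h1 : sLap f (c • y) = eucLap f (sphProj (c • y)) := rfl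
    rw [h1, sphProj_smul hc y]
    simp [sLap]

lemma good_gjms {u : Euc n → ℝ} (hu : Good u) : ∀ k, Good (gjms n k u) := by
  intro k
  induction k with
  | zero => exact hu
  | succ k ih =>
    constructor
    · have h1 : Sm (fun y => -(sLap (gjms n k u) y) +
          (((n : ℝ) - 2 * (k + 1)) * ((n : ℝ) + 2 * (k + 1) - 2) / 4) * gjms n k u y) :=
        ContDiffOn.add (ContDiffOn.neg (good_sLap ih).1) (ContDiffOn.mul contDiffOn_const ih.1)
      exact h1
    · intro c hc y hy
      have h1 : ∀ z : Euc n, gjms n (k+1) u z = -(sLap (gjms n k u) z) +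
          (((n : ℝ) - 2 * (k + 1)) * ((n : ℝ) + 2 * (k + 1) - 2) / 4) * gjms n k u z :=
        fun z => rfl
      rw [h1, h1, (good_sLap ih).2 c hc y hy, ih.2 c hc y hy]
      simp

lemma gjms_succ {u : Euc n → ℝ} (hu : Good u) (k : ℕ) {y : Euc n} (hy : y ≠ 0) :
    gjms n (k+1) u y = -(Lop (gjms n k u) y) +
      (((n : ℝ) - 2 * ((k : ℝ) + 1)) * ((n : ℝ) + 2 * ((k : ℝ) + 1) - 2) / 4)
        * gjms n k u y := by
  have h1 : gjms n (k+1) u y = -(sLap (gjms n k u) y) +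
      (((n : ℝ) - 2 * ((k : ℝ) + 1)) * ((n : ℝ) + 2 * ((k : ℝ) + 1) - 2) / 4)
        * gjms n k u y := rfl
  rw [h1, slap_eq_lop (good_gjms hu k) hy]
lemma comm_main {u : Euc n → ℝ} (hu : Good u) : ∀ m : ℕ, ∀ y : Euc n, y ≠ 0 →
    gjms n (m+1) (fun z => xf ℓ z * u z) y
      = xf ℓ y * gjms n (m+1) u y
        + ((m:ℝ)+1) * (((n:ℝ) + 2*((m:ℝ)+1) - 2) * (xf ℓ y * gjms n m u y)
           - 2 * Sg ℓ (gjms n m u) y) := by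
  intro m
  induction m with
  | zero =>
    intro y hy
    have hxu : Good (fun z => xf ℓ z * u z) := good_xmul hu
    rw [gjms_succ hxu 0 hy, gjms_succ hu 0 hy]
    have h0 : gjms n 0 (fun z => xf ℓ z * u z) = (fun z => xf ℓ z * u z) := rfl
    have h0' : gjms n 0 u = u := rfl
    rw [h0, h0', lop_xmul hu hy]
    push_cast
    ring
  | succ m ih =>
    intro y hy
    have hgood_g : Good (gjms n (m+1) u) := good_gjms hu (m+1)
    have hgood_v : Good (gjms n m u) := good_gjms hu m
    have hxu : Good (fun z => xf ℓ z * u z) := good_xmul hu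
    have hIH : ∀ z : Euc n, z ≠ 0 → gjms n (m+1) (fun w => xf ℓ w * u w) z =
        (fun z => xf ℓ z * gjms n (m+1) u z
          + ((((m:ℝ)+1) * ((n:ℝ) + 2*((m:ℝ)+1) - 2)) * (xf ℓ z * gjms n m u z)
            + (-(2 * ((m:ℝ)+1))) * Sg ℓ (gjms n m u) z)) z := by
      intro z hz
      have h := ih z hz
      simp only
      rw [h]
      ring
    rw [gjms_succ hxu (m+1) hy, lop_congr hIH hy]
    have hSmF : Sm (fun z => xf ℓ z * gjms n (m+1) u z) := (good_xmul hgood_g).1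
    have hSmG : Sm (fun z => xf ℓ z * gjms n m u z) := (good_xmul hgood_v).1
    have hSmH : Sm (Sg ℓ (gjms n m u)) := (good_sg hgood_v).1
    rw [lop_lin3 hSmF hSmG hSmH (((m:ℝ)+1) * ((n:ℝ) + 2*((m:ℝ)+1) - 2))
      (-(2 * ((m:ℝ)+1))) hy]
    rw [lop_xmul hgood_g hy, lop_xmul hgood_v hy, lop_sg hgood_v hy]
    have hLg : Lop (gjms n (m+1) u) y =
        (((n : ℝ) - 2 * (((m:ℝ)+1) + 1)) * ((n : ℝ) + 2 * (((m:ℝ)+1) + 1) - 2) / 4)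
          * gjms n (m+1) u y - gjms n (m+1+1) u y := by
      have h := gjms_succ hu (m+1) hy
      push_cast at h ⊢
      linear_combination h
    have hLv : ∀ z : Euc n, z ≠ 0 → Lop (gjms n m u) z =
        (fun z => (((n : ℝ) - 2 * ((m:ℝ) + 1)) * ((n : ℝ) + 2 * ((m:ℝ) + 1) - 2) / 4)
          * gjms n m u z + (-1) * gjms n (m+1) u z) z := by
      intro z hz
      have h := gjms_succ hu m hz
      simp only
      linear_combination h
    have hAfLv : Af ℓ (Lop (gjms n m u)) y =
        (((n : ℝ) - 2 * ((m:ℝ) + 1)) * ((n : ℝ) + 2 * ((m:ℝ) + 1) - 2) / 4)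
          * Af ℓ (gjms n m u) y + (-1) * Af ℓ (gjms n (m+1) u) y := by
      rw [af_congr hLv hy, af_lin hgood_v.1 hgood_g.1 _ _ hy]
    have hLv' := hLv y hy
    simp only at hLv'
    have hSgv : Sg ℓ (gjms n m u) y = rr 1 y * Af ℓ (gjms n m u) y := rfl
    have hSgg : Sg ℓ (gjms n (m+1) u) y = rr 1 y * Af ℓ (gjms n (m+1) u) y := rfl
    rw [ih y hy, hAfLv, hLg, hLv', hSgv, hSgg]
    push_cast
    ring

lemma rr_neg_one (y : Euc n) : rr (-1) y = ‖y‖⁻¹ := by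
  by_cases hy : y = 0
  · subst hy
    rw [rr, q]
    simp only [norm_zero]
    rw [show ((0:ℝ)^2 : ℝ) = 0 by norm_num, Real.zero_rpow (by norm_num), inv_zero]
  · rw [rr, q, ← Real.rpow_natCast ‖y‖ 2, ← Real.rpow_mul (norm_nonneg y)]
    rw [show ((2:ℕ):ℝ) * (((-1:ℤ):ℝ)/2) = -1 by push_cast; ring]
    rw [Real.rpow_neg_one]

lemma xf_eq (ℓ : Euc n →L[ℝ] ℝ) (y : Euc n) : ℓ (sphProj y) = xf ℓ y := by
  rw [sphProj, map_smul, smul_eq_mul, xf, rr_neg_one]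
  ring

lemma good_of_isSphFun {u : Euc n → ℝ} (hu : IsSphFun u) : Good u := by
  constructor
  · exact (hu.1).of_le (by simp)
  · intro c hc y hy
    rw [hu.2 c hc y]
    simp

lemma sphProj_of_norm_one {ζ : Euc n} (hζ : ‖ζ‖ = 1) : sphProj ζ = ζ := by
  rw [sphProj, hζ]
  simp

end Aux

open Aux in
/-- For a first spherical harmonic `x` (restriction of a linear function on
`ℝ^{n+1}`) with spherical gradient `X = ∇x`,
`[L_{2k}, x] = k ((n + 2k - 2) x - 2 𝓛_X) ∘ L_{2k-2}`. -/
theorem gjms_commutator_spherical_harmonic (n k : ℕ) (hk : 1 ≤ k)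
    (ℓ : Euc n →L[ℝ] ℝ) (u : Euc n → ℝ) (hu : IsSphFun u) :
    ∀ ζ : Euc n, ‖ζ‖ = 1 →
      gjms n k (fun y => ℓ (sphProj y) * u y) ζ - ℓ (sphProj ζ) * gjms n k u ζ =
        (k : ℝ) * (((n : ℝ) + 2 * k - 2) * ℓ (sphProj ζ) * gjms n (k - 1) u ζ
          - 2 * sGradPair (fun y => ℓ (sphProj y)) (gjms n (k - 1) u) ζ) := by
  intro ζ hζ
  have hζ0 : ζ ≠ 0 := by
    intro h
    rw [h, norm_zero] at hζ
    norm_num at hζ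
  have hgu : Good u := good_of_isSphFun hu
  obtain ⟨m, rfl⟩ : ∃ m, k = m + 1 := ⟨k - 1, (Nat.succ_pred_eq_of_pos hk).symm⟩
  have hxfun : (fun y : Euc n => ℓ (sphProj y)) = xf ℓ := funext fun y => xf_eq ℓ y
  have hfun : (fun y : Euc n => ℓ (sphProj y) * u y) = (fun y => xf ℓ y * u y) :=
    funext fun y => by rw [xf_eq ℓ y]
  have hk1 : m + 1 - 1 = m := rfl
  have hproj : sphProj ζ = ζ := sphProj_of_norm_one hζ
  have hgood_v : Good (gjms n m u) := good_gjms hgu m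
  have hpair : sGradPair (fun y => ℓ (sphProj y)) (gjms n (m + 1 - 1) u) ζ =
      Af ℓ (gjms n m u) ζ := by
    rw [hk1, sGradPair, hxfun, hproj]
    rw [grad_pair hgood_v hζ0, rr_of_norm_one hζ (-1), one_mul]
  have hmain := comm_main (ℓ := ℓ) hgu m ζ hζ0
  have hSg : Sg ℓ (gjms n m u) ζ = Af ℓ (gjms n m u) ζ := by
    rw [show Sg ℓ (gjms n m u) ζ = rr 1 ζ * Af ℓ (gjms n m u) ζ from rfl,
      rr_of_norm_one hζ 1, one_mul]
  rw [hpair, hfun, hk1, xf_eq ℓ ζ, hmain, hSg]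
  push_cast
  ring
end
end

section
/- On the round $n$-sphere of constant sectional curvature one, with $x^0,\dots,x^n$ the restrictions of the standard coordinates of $\mathbb{R}^{n+1}$, the GJMS operators satisfy the commutator identity $\sum_{i=0}^n x^i\,[L_{2k}, x^i]\,u = k(n+2k-2)\, L_{2k-2}\,u$ for all smooth functions $u$ on $S^n$. -/
/-!
Functions on the round sphere `S^n ⊂ ℝ^{n+1}` (sectional curvature one) are
represented by their 0-homogeneous extensions to `ℝ^{n+1} \ {0}`.  For such an
extension `u`, the Euclidean Laplacian evaluated on the unit sphere is the
Laplace–Beltrami operator of the round metric applied to `u|_{S^n}`.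
-/

noncomputable section

open scoped RealInnerProductSpace

namespace GJMSAux

variable {n : ℕ}

def NZ (n : ℕ) : Set (Euc n) := {y | y ≠ 0}

lemma isOpen_nz : IsOpen (NZ n) := isOpen_ne

def q : Euc n → ℝ := fun y => ∑ j, (y j)^2
def rho : Euc n → ℝ := fun y => (Real.sqrt (q y))⁻¹
def X (i : Fin (n+1)) : Euc n → ℝ := fun y => rho y * y i
def SM (f : Euc n → ℝ) : Prop := ContDiffOn ℝ (⊤ : ℕ∞) f (NZ n)
def Hom (m : ℤ) (f : Euc n → ℝ) : Prop :=
  ∀ c : ℝ, 0 < c → ∀ y : Euc n, y ≠ 0 → f (c • y) = c ^ m * f y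
def Nice (m : ℤ) (f : Euc n → ℝ) : Prop := SM f ∧ Hom m f
def NZEq (f g : Euc n → ℝ) : Prop := ∀ y : Euc n, y ≠ 0 → f y = g y

/-! ### Basics about q, rho -/

lemma sqrt_q (y : Euc n) : Real.sqrt (q y) = ‖y‖ := by
  rw [EuclideanSpace.norm_eq]
  congr 1
  simp [q, Real.norm_eq_abs, sq_abs]

lemma q_nonneg (y : Euc n) : 0 ≤ q y := Finset.sum_nonneg fun j _ => sq_nonneg _

lemma q_eq_norm_sq (y : Euc n) : q y = ‖y‖ ^ 2 := by
  rw [← sqrt_q, Real.sq_sqrt (q_nonneg y)]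

lemma q_pos {y : Euc n} (hy : y ≠ 0) : 0 < q y := by
  have h : 0 < ‖y‖ := norm_pos_iff.2 hy
  rw [q_eq_norm_sq]; positivity

lemma rho_eq (y : Euc n) : rho y = ‖y‖⁻¹ := by rw [rho, sqrt_q]

lemma rho_pos {y : Euc n} (hy : y ≠ 0) : 0 < rho y := by
  rw [rho_eq]
  simp [norm_pos_iff.2 hy]

lemma q_unit {y : Euc n} (hy : ‖y‖ = 1) : q y = 1 := by simp [q_eq_norm_sq, hy]

lemma rho_unit {y : Euc n} (hy : ‖y‖ = 1) : rho y = 1 := by simp [rho_eq, hy]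

lemma q_rho_sq {y : Euc n} (hy : y ≠ 0) : q y * rho y ^ 2 = 1 := by
  have h : ‖y‖ ≠ 0 := norm_ne_zero_iff.2 hy
  rw [q_eq_norm_sq, rho_eq]
  field_simp

lemma unit_ne_zero {y : Euc n} (hy : ‖y‖ = 1) : y ≠ 0 := by
  intro h; rw [h] at hy; simp at hy

lemma sphProj_norm {y : Euc n} (hy : y ≠ 0) : ‖sphProj y‖ = 1 := by
  have h : ‖y‖ ≠ 0 := norm_ne_zero_iff.2 hy
  rw [sphProj, norm_smul]
  simp [abs_of_nonneg (norm_nonneg y), h]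

lemma sphProj_ne_zero {y : Euc n} (hy : y ≠ 0) : sphProj y ≠ 0 :=
  unit_ne_zero (sphProj_norm hy)

lemma X_eq_sCoord (i : Fin (n+1)) (y : Euc n) : X i y = sCoord i y := by
  rw [X, rho_eq, sCoord, sphProj]
  simp [mul_comm]

lemma X_unit {y : Euc n} (hy : ‖y‖ = 1) (i : Fin (n+1)) : X i y = y i := by
  rw [X, rho_unit hy, one_mul]

/-! ### SM: smoothness plumbing -/

lemma SM.diffAt {f : Euc n → ℝ} (hf : SM f) {y : Euc n} (hy : y ≠ 0) :
    DifferentiableAt ℝ f y :=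
  (ContDiffOn.contDiffAt hf (isOpen_nz.mem_nhds hy)).differentiableAt (by simp)

lemma SM.pd {f : Euc n → ℝ} (hf : SM f) (j : Fin (n+1)) : SM (pd j f) := by
  have h := ContDiffOn.fderiv_of_isOpen hf isOpen_nz (m := (⊤ : ℕ∞)) (by simp)
  exact h.clm_apply contDiffOn_const

lemma sm_const (c : ℝ) : SM (n := n) (fun _ => c) := contDiffOn_const

lemma sm_coord (i : Fin (n+1)) : SM (fun y : Euc n => y i) :=
  (EuclideanSpace.proj (𝕜 := ℝ) i).contDiff.contDiffOn

lemma SM.mul {f g : Euc n → ℝ} (hf : SM f) (hg : SM g) : SM (fun y => f y * g y) :=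
  ContDiffOn.mul hf hg

lemma SM.add {f g : Euc n → ℝ} (hf : SM f) (hg : SM g) : SM (fun y => f y + g y) :=
  ContDiffOn.add hf hg

lemma SM.sub {f g : Euc n → ℝ} (hf : SM f) (hg : SM g) : SM (fun y => f y - g y) :=
  ContDiffOn.sub hf hg

lemma SM.neg {f : Euc n → ℝ} (hf : SM f) : SM (fun y => -(f y)) := ContDiffOn.neg hf

lemma SM.cmul {f : Euc n → ℝ} (c : ℝ) (hf : SM f) : SM (fun y => c * f y) :=
  (sm_const c).mul hf

lemma SM.sum {ι : Type*} (s : Finset ι) {f : ι → Euc n → ℝ} (hf : ∀ i ∈ s, SM (f i)) :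
    SM (fun y => ∑ i ∈ s, f i y) := by
  classical
  induction s using Finset.induction with
  | empty => simpa using sm_const (n := n) 0
  | insert _ _ hx ih =>
      rename_i a s
      have h1 := hf a (Finset.mem_insert_self a s)
      have h2 := ih fun i hi => hf i (Finset.mem_insert_of_mem hi)
      have h3 := ContDiffOn.add h1 h2
      refine ContDiffOn.congr h3 fun y _ => ?_
      rw [Finset.sum_insert hx]

lemma sm_q : SM (q (n := n)) := by
  apply SM.sum
  intro j _
  exact ContDiffOn.congr (ContDiffOn.mul (sm_coord j) (sm_coord j)) fun y _ => by ring

lemma sm_rho : SM (rho (n := n)) := by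
  intro y hy
  have hq : ContDiffAt ℝ (⊤ : ℕ∞) q y := ContDiffOn.contDiffAt sm_q (isOpen_nz.mem_nhds hy)
  have hs : ContDiffAt ℝ (⊤ : ℕ∞) (fun t : ℝ => Real.sqrt t) (q y) :=
    Real.contDiffAt_sqrt (ne_of_gt (q_pos hy))
  have h1 : ContDiffAt ℝ (⊤ : ℕ∞) (fun y : Euc n => Real.sqrt (q y)) y := hs.comp y hq
  have h2 : ContDiffAt ℝ (⊤ : ℕ∞) rho y := by
    apply h1.inv
    rw [sqrt_q]
    exact norm_ne_zero_iff.2 hy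
  exact h2.contDiffWithinAt

lemma sm_X (i : Fin (n+1)) : SM (X i) := SM.mul sm_rho (sm_coord i)

/-! ### congruence -/

lemma NZEq.symm {f g : Euc n → ℝ} (h : NZEq f g) : NZEq g f := fun y hy => (h y hy).symm

lemma NZEq.trans {f g h : Euc n → ℝ} (h1 : NZEq f g) (h2 : NZEq g h) : NZEq f h :=
  fun y hy => (h1 y hy).trans (h2 y hy)

lemma pd_congr {f g : Euc n → ℝ} (h : NZEq f g) {y : Euc n} (hy : y ≠ 0) (j : Fin (n+1)) :
    pd j f y = pd j g y := by
  have hev : f =ᶠ[nhds y] g :=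
    Filter.eventuallyEq_of_mem (isOpen_nz.mem_nhds hy) fun z hz => h z hz
  unfold pd
  rw [hev.fderiv_eq]

lemma pd_congr' {f g : Euc n → ℝ} (h : NZEq f g) (j : Fin (n+1)) :
    NZEq (pd j f) (pd j g) := fun y hy => pd_congr h hy j

lemma eucLap_congr {f g : Euc n → ℝ} (h : NZEq f g) : NZEq (eucLap f) (eucLap g) := by
  intro y hy
  unfold eucLap
  exact Finset.sum_congr rfl fun j _ => pd_congr (pd_congr' h j) hy j

end GJMSAux
namespace GJMSAux

variable {n : ℕ}

/-! ### pd rules -/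

lemma pd_eval {f : Euc n → ℝ} {L : Euc n →L[ℝ] ℝ} {y : Euc n}
    (h : HasFDerivAt f L y) (j : Fin (n+1)) : pd j f y = L (EuclideanSpace.single j 1) := by
  rw [pd, h.fderiv]

lemma pd_mul {f g : Euc n → ℝ} {y : Euc n} (hf : DifferentiableAt ℝ f y)
    (hg : DifferentiableAt ℝ g y) (j : Fin (n+1)) :
    pd j (fun z => f z * g z) y = pd j f y * g y + f y * pd j g y := by
  have h := (hf.hasFDerivAt.fun_mul hg.hasFDerivAt)
  rw [pd_eval h]
  simp [pd]
  ring

lemma pd_add {f g : Euc n → ℝ} {y : Euc n} (hf : DifferentiableAt ℝ f y)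
    (hg : DifferentiableAt ℝ g y) (j : Fin (n+1)) :
    pd j (fun z => f z + g z) y = pd j f y + pd j g y := by
  have h := (hf.hasFDerivAt.fun_add hg.hasFDerivAt)
  rw [pd_eval h]
  simp [pd]

lemma pd_sub {f g : Euc n → ℝ} {y : Euc n} (hf : DifferentiableAt ℝ f y)
    (hg : DifferentiableAt ℝ g y) (j : Fin (n+1)) :
    pd j (fun z => f z - g z) y = pd j f y - pd j g y := by
  have h := (hf.hasFDerivAt.fun_sub hg.hasFDerivAt)
  rw [pd_eval h]
  simp [pd]

lemma pd_const (c : ℝ) (y : Euc n) (j : Fin (n+1)) : pd j (fun _ => c) y = 0 := by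
  unfold pd
  rw [fderiv_fun_const]
  simp

lemma pd_cmul {f : Euc n → ℝ} {y : Euc n} (hf : DifferentiableAt ℝ f y) (c : ℝ) (j : Fin (n+1)) :
    pd j (fun z => c * f z) y = c * pd j f y := by
  unfold pd
  rw [fderiv_const_mul hf]
  simp

lemma pd_sum {ι : Type*} (s : Finset ι) {f : ι → Euc n → ℝ} {y : Euc n}
    (hf : ∀ i ∈ s, DifferentiableAt ℝ (f i) y) (j : Fin (n+1)) :
    pd j (fun z => ∑ i ∈ s, f i z) y = ∑ i ∈ s, pd j (f i) y := by
  unfold pd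
  rw [fderiv_fun_sum hf]
  simp

lemma pd_coord (i : Fin (n+1)) (y : Euc n) (j : Fin (n+1)) :
    pd j (fun z : Euc n => z i) y = if j = i then 1 else 0 := by
  have h : HasFDerivAt (fun z : Euc n => z i) (EuclideanSpace.proj (𝕜 := ℝ) i) y :=
    (EuclideanSpace.proj (𝕜 := ℝ) i).hasFDerivAt
  rw [pd_eval h]
  simp [EuclideanSpace.proj, EuclideanSpace.single_apply, eq_comm]

lemma hasFDerivAt_q (y : Euc n) :
    HasFDerivAt q (∑ l, (2 * y l) • (EuclideanSpace.proj (𝕜 := ℝ) l)) y := by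
  have h : ∀ l ∈ (Finset.univ : Finset (Fin (n+1))),
      HasFDerivAt (fun z : Euc n => (z l)^2) ((2 * y l) • (EuclideanSpace.proj (𝕜 := ℝ) l)) y := by
    intro l _
    have hp := (EuclideanSpace.proj (𝕜 := ℝ) l).hasFDerivAt (x := y)
    have h0 := hp.fun_mul hp
    have hfun : (fun z : Euc n => (z l)^2) = fun z => (EuclideanSpace.proj (𝕜 := ℝ) l) z * (EuclideanSpace.proj (𝕜 := ℝ) l) z := by
      funext z
      simp [EuclideanSpace.proj]
      ring
    rw [hfun]
    refine h0.congr_fderiv ?_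
    ext v
    simp [EuclideanSpace.proj, two_smul]
    ring
  have := HasFDerivAt.fun_sum h
  exact this

lemma pd_q (y : Euc n) (j : Fin (n+1)) : pd j q y = 2 * y j := by
  rw [pd_eval (hasFDerivAt_q y)]
  simp [EuclideanSpace.proj, EuclideanSpace.single_apply]

lemma diff_q (y : Euc n) : DifferentiableAt ℝ q y := (hasFDerivAt_q y).differentiableAt

lemma pd_rho {y : Euc n} (hy : y ≠ 0) (j : Fin (n+1)) :
    pd j rho y = -(y j) * rho y ^ 3 := by
  have hqpos := q_pos hy
  have hs : Real.sqrt (q y) > 0 := Real.sqrt_pos.2 hqpos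
  have h1 : HasDerivAt (fun t : ℝ => (Real.sqrt t)⁻¹)
      (-(1 / (2 * Real.sqrt (q y))) / (Real.sqrt (q y))^2) (q y) :=
    (Real.hasDerivAt_sqrt (ne_of_gt hqpos)).inv (ne_of_gt hs)
  have h2 : HasFDerivAt rho
      ((-(1 / (2 * Real.sqrt (q y))) / (Real.sqrt (q y))^2) • (∑ l, (2 * y l) • (EuclideanSpace.proj (𝕜 := ℝ) l))) y :=
    h1.comp_hasFDerivAt y (hasFDerivAt_q y)
  rw [pd_eval h2]
  have hev : (∑ l, (2 * y l) • (EuclideanSpace.proj (𝕜 := ℝ) l)) (EuclideanSpace.single j 1) = 2 * y j := by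
    simp [EuclideanSpace.proj, EuclideanSpace.single_apply]
  rw [ContinuousLinearMap.smul_apply, hev]
  rw [rho]
  field_simp
  rw [pow_succ, Real.sq_sqrt (q_nonneg y)]
  ring
  field_simp [ne_of_gt hqpos, ne_of_gt hs]

/-! ### Hom -/

lemma Hom.mul {m m' : ℤ} {f g : Euc n → ℝ} (hf : Hom m f) (hg : Hom m' g) :
    Hom (m + m') (fun y => f y * g y) := by
  intro c hc y hy
  show f (c • y) * g (c • y) = _
  rw [hf c hc y hy, hg c hc y hy, zpow_add₀ (ne_of_gt hc)]
  ring

lemma Hom.add {m : ℤ} {f g : Euc n → ℝ} (hf : Hom m f) (hg : Hom m g) :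
    Hom m (fun y => f y + g y) := by
  intro c hc y hy
  show f (c • y) + g (c • y) = _
  rw [hf c hc y hy, hg c hc y hy]
  ring

lemma Hom.sub {m : ℤ} {f g : Euc n → ℝ} (hf : Hom m f) (hg : Hom m g) :
    Hom m (fun y => f y - g y) := by
  intro c hc y hy
  show f (c • y) - g (c • y) = _
  rw [hf c hc y hy, hg c hc y hy]
  ring

lemma Hom.neg {m : ℤ} {f : Euc n → ℝ} (hf : Hom m f) : Hom m (fun y => -(f y)) := by
  intro c hc y hy
  show -(f (c • y)) = _
  rw [hf c hc y hy]
  ring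

lemma Hom.cmul {m : ℤ} {f : Euc n → ℝ} (c₀ : ℝ) (hf : Hom m f) :
    Hom m (fun y => c₀ * f y) := by
  intro c hc y hy
  show c₀ * f (c • y) = _
  rw [hf c hc y hy]
  ring

lemma Hom.sum {ι : Type*} (s : Finset ι) {m : ℤ} {f : ι → Euc n → ℝ}
    (hf : ∀ i ∈ s, Hom m (f i)) : Hom m (fun y => ∑ i ∈ s, f i y) := by
  intro c hc y hy
  show (∑ i ∈ s, f i (c • y)) = _
  simp only
  rw [Finset.mul_sum]
  exact Finset.sum_congr rfl fun i hi => hf i hi c hc y hy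

lemma hom_coord (i : Fin (n+1)) : Hom 1 (fun y : Euc n => y i) := by
  intro c hc y hy
  simp [PiLp.smul_apply, smul_eq_mul]

lemma hom_q : Hom (n := n) 2 q := by
  intro c hc y hy
  show (∑ j, ((c • y) j)^2) = _
  unfold q
  simp only
  rw [Finset.mul_sum]
  refine Finset.sum_congr rfl fun j _ => ?_
  have : (c • y) j = c * y j := rfl
  rw [this]
  ring_nf
  rw [zpow_two]
  ring

lemma hom_rho : Hom (n := n) (-1) rho := by
  intro c hc y hy
  rw [rho_eq, rho_eq, norm_smul]
  rw [Real.norm_eq_abs, abs_of_pos hc]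
  rw [mul_inv, zpow_neg_one]

lemma hom_X (i : Fin (n+1)) : Hom 0 (X i) := by
  have := (hom_rho (n := n)).mul (hom_coord i)
  simp at this
  exact this

lemma hom_pd {m : ℤ} {f : Euc n → ℝ} (hf : SM f) (h : Hom m f) (j : Fin (n+1)) :
    Hom (m - 1) (pd j f) := by
  intro c hc y hy
  have hcy : c • y ≠ 0 := smul_ne_zero (ne_of_gt hc) hy
  have hdy : DifferentiableAt ℝ f y := hf.diffAt hy
  have hdcy : DifferentiableAt ℝ f (c • y) := hf.diffAt hcy
  -- derivative of z ↦ f (c • z) at y, two ways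
  have hsm : HasFDerivAt (fun z : Euc n => c • z) (c • ContinuousLinearMap.id ℝ (Euc n)) y := by
    have := (ContinuousLinearMap.id ℝ (Euc n)).hasFDerivAt (x := y)
    exact this.const_smul c
  have h1 : HasFDerivAt (fun z : Euc n => f (c • z))
      ((fderiv ℝ f (c • y)).comp (c • ContinuousLinearMap.id ℝ (Euc n))) y :=
    hdcy.hasFDerivAt.comp y hsm
  have h2 : NZEq (fun z : Euc n => f (c • z)) (fun z => c ^ m * f z) :=
    fun z hz => h c hc z hz
  have e1 : pd j (fun z : Euc n => f (c • z)) y = c * pd j f (c • y) := by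
    rw [pd_eval h1]
    simp [pd]
  have e2 : pd j (fun z : Euc n => f (c • z)) y = c ^ m * pd j f y := by
    rw [pd_congr h2 hy j, pd_cmul hdy]
  have hcne : c ≠ 0 := ne_of_gt hc
  have := e1.symm.trans e2
  field_simp at this ⊢
  rw [zpow_sub₀ hcne]
  field_simp
  linarith [this]

/-! ### Euler's identity -/

lemma decomp (y : Euc n) : (∑ j, y j • EuclideanSpace.single j (1:ℝ)) = y := by
  ext l
  rw [show (∑ j, y j • EuclideanSpace.single j (1:ℝ)) l
      = ∑ j, (y j • EuclideanSpace.single j (1:ℝ)) l from by rw [WithLp.ofLp_sum, Finset.sum_apply]]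
  simp [EuclideanSpace.single_apply]

lemma euler {m : ℤ} {f : Euc n → ℝ} (hf : SM f) (h : Hom m f) {y : Euc n} (hy : y ≠ 0) :
    ∑ j, y j * pd j f y = m * f y := by
  have hdy : DifferentiableAt ℝ f y := hf.diffAt hy
  -- φ c = f (c • y) has derivative (fderiv f y) y at c = 1
  have hc1 : HasDerivAt (fun c : ℝ => c • y) y 1 := by
    have := (hasDerivAt_id (1:ℝ)).smul_const y
    simpa using this
  have hphi : HasDerivAt (fun c : ℝ => f (c • y)) (fderiv ℝ f y y) 1 := by
    have hx : HasFDerivAt f (fderiv ℝ f y) ((1:ℝ) • y) := by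
      rw [one_smul]; exact hdy.hasFDerivAt
    have := hx.comp_hasDerivAt 1 hc1
    exact this
  -- φ agrees with c ↦ c ^ m * f y near 1
  have hev : (fun c : ℝ => f (c • y)) =ᶠ[nhds 1] (fun c : ℝ => c ^ m * f y) := by
    have hmem : Set.Ioi (0:ℝ) ∈ nhds (1:ℝ) := isOpen_Ioi.mem_nhds (by norm_num)
    filter_upwards [hmem] with c hc
    exact h c hc y hy
  have hphi2 : HasDerivAt (fun c : ℝ => c ^ m * f y) ((m : ℝ) * f y) 1 := by
    have := (hasDerivAt_zpow m (1:ℝ) (Or.inl one_ne_zero)).mul_const (f y)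
    simpa using this
  have heq : fderiv ℝ f y y = (m : ℝ) * f y := by
    have hphi' : HasDerivAt (fun c : ℝ => c ^ m * f y) (fderiv ℝ f y y) 1 :=
      hphi.congr_of_eventuallyEq hev.symm
    exact hphi'.unique hphi2
  calc ∑ j, y j * pd j f y
      = fderiv ℝ f y (∑ j, y j • EuclideanSpace.single j (1:ℝ)) := by
        rw [map_sum]
        exact Finset.sum_congr rfl fun j _ => by rw [map_smul]; rfl
    _ = (m : ℝ) * f y := by rw [decomp]; exact heq

end GJMSAux
namespace GJMSAux

variable {n : ℕ}

/-! ### Schwarz symmetry -/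

lemma pd_pd_eq {f : Euc n → ℝ} (hf : SM f) {y : Euc n} (hy : y ≠ 0) (l j : Fin (n+1)) :
    pd l (pd j f) y
      = fderiv ℝ (fderiv ℝ f) y (EuclideanSpace.single l 1) (EuclideanSpace.single j 1) := by
  have hdf : DifferentiableAt ℝ (fderiv ℝ f) y := by
    have h := ContDiffOn.fderiv_of_isOpen hf isOpen_nz (m := (⊤ : ℕ∞)) (by simp)
    exact (ContDiffOn.contDiffAt h (isOpen_nz.mem_nhds hy)).differentiableAt (by simp)
  have hu : DifferentiableAt ℝ (fun _ : Euc n => EuclideanSpace.single j (1:ℝ)) y :=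
    differentiableAt_const _
  show fderiv ℝ (fun z => (fderiv ℝ f z) (EuclideanSpace.single j 1)) y _ = _
  rw [fderiv_clm_apply hdf hu]
  simp

lemma pd_comm {f : Euc n → ℝ} (hf : SM f) {y : Euc n} (hy : y ≠ 0) (l j : Fin (n+1)) :
    pd l (pd j f) y = pd j (pd l f) y := by
  rw [pd_pd_eq hf hy, pd_pd_eq hf hy]
  have hsym : IsSymmSndFDerivAt ℝ f y :=
    (ContDiffOn.contDiffAt hf (isOpen_nz.mem_nhds hy)).isSymmSndFDerivAt (by rw [minSmoothness_of_isRCLikeNormedField]; exact WithTop.coe_le_coe.2 le_top)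
  exact hsym _ _

/-! ### eucLap basic rules -/

lemma eucLap_mul {f g : Euc n → ℝ} (hf : SM f) (hg : SM g) {y : Euc n} (hy : y ≠ 0) :
    eucLap (fun z => f z * g z) y
      = eucLap f y * g y + 2 * (∑ j, pd j f y * pd j g y) + f y * eucLap g y := by
  unfold eucLap
  have key : ∀ j : Fin (n+1), pd j (pd j (fun z => f z * g z)) y
      = pd j (pd j f) y * g y + 2 * (pd j f y * pd j g y) + f y * pd j (pd j g) y := by
    intro j
    have h1 : NZEq (pd j (fun z => f z * g z)) (fun z => pd j f z * g z + f z * pd j g z) :=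
      fun z hz => pd_mul (hf.diffAt hz) (hg.diffAt hz) j
    rw [pd_congr h1 hy j]
    rw [pd_add (((hf.pd j).mul hg).diffAt hy) ((hf.mul (hg.pd j)).diffAt hy) j]
    rw [pd_mul ((hf.pd j).diffAt hy) (hg.diffAt hy) j]
    rw [pd_mul (hf.diffAt hy) ((hg.pd j).diffAt hy) j]
    ring
  rw [Finset.sum_congr rfl fun j _ => key j]
  rw [Finset.sum_add_distrib, Finset.sum_add_distrib, ← Finset.sum_mul, ← Finset.mul_sum,
    ← Finset.mul_sum]

lemma eucLap_sum {ι : Type*} (s : Finset ι) {f : ι → Euc n → ℝ} (hf : ∀ i ∈ s, SM (f i))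
    {y : Euc n} (hy : y ≠ 0) :
    eucLap (fun z => ∑ i ∈ s, f i z) y = ∑ i ∈ s, eucLap (f i) y := by
  unfold eucLap
  have key : ∀ j : Fin (n+1), pd j (pd j (fun z => ∑ i ∈ s, f i z)) y
      = ∑ i ∈ s, pd j (pd j (f i)) y := by
    intro j
    have h1 : NZEq (pd j (fun z => ∑ i ∈ s, f i z)) (fun z => ∑ i ∈ s, pd j (f i) z) :=
      fun z hz => pd_sum s (fun i hi => (hf i hi).diffAt hz) j
    rw [pd_congr h1 hy j]
    exact pd_sum s (fun i hi => ((hf i hi).pd j).diffAt hy) j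
  rw [Finset.sum_congr rfl fun j _ => key j]
  exact Finset.sum_comm

lemma eucLap_add {f g : Euc n → ℝ} (hf : SM f) (hg : SM g) {y : Euc n} (hy : y ≠ 0) :
    eucLap (fun z => f z + g z) y = eucLap f y + eucLap g y := by
  unfold eucLap
  have key : ∀ j : Fin (n+1), pd j (pd j (fun z => f z + g z)) y
      = pd j (pd j f) y + pd j (pd j g) y := by
    intro j
    have h1 : NZEq (pd j (fun z => f z + g z)) (fun z => pd j f z + pd j g z) :=
      fun z hz => pd_add (hf.diffAt hz) (hg.diffAt hz) j
    rw [pd_congr h1 hy j]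
    exact pd_add ((hf.pd j).diffAt hy) ((hg.pd j).diffAt hy) j
  rw [Finset.sum_congr rfl fun j _ => key j, Finset.sum_add_distrib]

lemma eucLap_cmul {f : Euc n → ℝ} (hf : SM f) (c : ℝ) {y : Euc n} (hy : y ≠ 0) :
    eucLap (fun z => c * f z) y = c * eucLap f y := by
  unfold eucLap
  have key : ∀ j : Fin (n+1), pd j (pd j (fun z => c * f z)) y = c * pd j (pd j f) y := by
    intro j
    have h1 : NZEq (pd j (fun z => c * f z)) (fun z => c * pd j f z) :=
      fun z hz => pd_cmul (hf.diffAt hz) c j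
    rw [pd_congr h1 hy j]
    exact pd_cmul ((hf.pd j).diffAt hy) c j
  rw [Finset.sum_congr rfl fun j _ => key j, ← Finset.mul_sum]

lemma eucLap_sub {f g : Euc n → ℝ} (hf : SM f) (hg : SM g) {y : Euc n} (hy : y ≠ 0) :
    eucLap (fun z => f z - g z) y = eucLap f y - eucLap g y := by
  unfold eucLap
  have key : ∀ j : Fin (n+1), pd j (pd j (fun z => f z - g z)) y
      = pd j (pd j f) y - pd j (pd j g) y := by
    intro j
    have h1 : NZEq (pd j (fun z => f z - g z)) (fun z => pd j f z - pd j g z) :=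
      fun z hz => pd_sub (hf.diffAt hz) (hg.diffAt hz) j
    rw [pd_congr h1 hy j]
    exact pd_sub ((hf.pd j).diffAt hy) ((hg.pd j).diffAt hy) j
  rw [Finset.sum_congr rfl fun j _ => key j, Finset.sum_sub_distrib]

lemma sm_eucLap {f : Euc n → ℝ} (hf : SM f) : SM (eucLap f) := by
  have : SM (fun y : Euc n => ∑ j, pd j (pd j f) y) :=
    SM.sum Finset.univ fun j _ => (hf.pd j).pd j
  exact this

lemma hom_eucLap {m : ℤ} {f : Euc n → ℝ} (hf : SM f) (h : Hom m f) :
    Hom (m - 2) (eucLap f) := by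
  have : Hom (m - 2) (fun y : Euc n => ∑ j, pd j (pd j f) y) := by
    apply Hom.sum
    intro j _
    have h1 := hom_pd hf h j
    have h2 := hom_pd (hf.pd j) h1 j
    have : m - 1 - 1 = m - 2 := by ring
    rwa [this] at h2
  exact this

/-- `Δ ∘ ∂ⱼ = ∂ⱼ ∘ Δ` on smooth functions away from `0`. -/
lemma eucLap_pd_comm {f : Euc n → ℝ} (hf : SM f) (j : Fin (n+1)) :
    NZEq (eucLap (pd j f)) (pd j (eucLap f)) := by
  intro y hy
  unfold eucLap
  have key : ∀ l : Fin (n+1), pd l (pd l (pd j f)) y = pd j (pd l (pd l f)) y := by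
    intro l
    have h1 : NZEq (pd l (pd j f)) (pd j (pd l f)) :=
      fun z hz => pd_comm hf hz l j
    rw [pd_congr h1 hy l]
    exact pd_comm (hf.pd l) hy l j
  rw [Finset.sum_congr rfl fun l _ => key l]
  have h2 : NZEq (pd j (fun z => ∑ l, pd l (pd l f) z)) (fun z => ∑ l, pd j (pd l (pd l f)) z) :=
    fun z hz => pd_sum Finset.univ (fun l _ => ((hf.pd l).pd l).diffAt hz) j
  exact (h2 y hy).symm

end GJMSAux
namespace GJMSAux

variable {n : ℕ}

/-! ### derivatives of rho powers and X -/

lemma diff_rho {y : Euc n} (hy : y ≠ 0) : DifferentiableAt ℝ (rho (n := n)) y :=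
  SM.diffAt sm_rho hy

lemma sm_rho_pow (m : ℕ) : SM (fun y : Euc n => rho y ^ m) := by
  have : SM (rho (n := n)) := sm_rho
  induction m with
  | zero => simpa using sm_const (n := n) 1
  | succ k ih =>
      have h := SM.mul ih sm_rho
      refine ContDiffOn.congr h fun y _ => ?_
      rw [pow_succ]

lemma pd_rho_pow {y : Euc n} (hy : y ≠ 0) (m : ℕ) (j : Fin (n+1)) :
    pd j (fun z => rho z ^ m) y = -((m : ℝ) * y j) * rho y ^ (m + 2) := by
  induction m with
  | zero => simp [pd_const]
  | succ k ih =>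
      have h1 : NZEq (fun z : Euc n => rho z ^ (k+1)) (fun z => rho z ^ k * rho z) :=
        fun z _ => pow_succ _ _
    -- differentiate the product
      rw [pd_congr h1 hy j]
      rw [pd_mul ((sm_rho_pow k).diffAt hy) (diff_rho hy) j, ih, pd_rho hy j]
      have hne : rho y ≠ 0 := ne_of_gt (rho_pos hy)
      push_cast
      ring

lemma pd_X {y : Euc n} (hy : y ≠ 0) (i j : Fin (n+1)) :
    pd j (X i) y = (if j = i then 1 else 0) * rho y - y i * y j * rho y ^ 3 := by
  unfold X
  rw [pd_mul (diff_rho hy) ((sm_coord i).diffAt hy) j, pd_rho hy j, pd_coord i y j]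
  ring

/-- second derivative of X, explicit -/
lemma pd_pd_X {y : Euc n} (hy : y ≠ 0) (i j l : Fin (n+1)) :
    pd l (pd j (X i)) y
      = -((if j = i then 1 else 0) * y l) * rho y ^ 3
        - ((if l = i then 1 else 0) * y j) * rho y ^ 3
        - ((if l = j then 1 else 0) * y i) * rho y ^ 3
        + 3 * y i * y j * y l * rho y ^ 5 := by
  have h1 : NZEq (pd j (X i))
      (fun z => (if j = i then 1 else 0) * rho z - z i * z j * rho z ^ 3) :=
    fun z hz => pd_X hz i j
  rw [pd_congr h1 hy l]
  have d1 : DifferentiableAt ℝ (fun z : Euc n => (if j = i then (1:ℝ) else 0) * rho z) y :=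
    (SM.cmul _ sm_rho).diffAt hy
  have d2 : DifferentiableAt ℝ (fun z : Euc n => z i * z j * rho z ^ 3) y :=
    (((sm_coord i).mul (sm_coord j)).mul (sm_rho_pow 3)).diffAt hy
  rw [pd_sub d1 d2 l, pd_cmul (diff_rho hy) _ l, pd_rho hy l]
  rw [pd_mul (((sm_coord i).mul (sm_coord j)).diffAt hy) ((sm_rho_pow 3).diffAt hy) l]
  rw [pd_mul ((sm_coord i).diffAt hy) ((sm_coord j).diffAt hy) l]
  rw [pd_rho_pow hy 3 l, pd_coord i y l, pd_coord j y l]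
  push_cast
  ring

lemma eucLap_X {y : Euc n} (hy : y ≠ 0) (i : Fin (n+1)) :
    eucLap (X i) y = -(n : ℝ) * y i * rho y ^ 3 := by
  unfold eucLap
  rw [Finset.sum_congr rfl fun j _ => pd_pd_X hy i j j]
  have step : ∀ j : Fin (n+1),
      -((if j = i then (1:ℝ) else 0) * y j) * rho y ^ 3
        - ((if j = i then 1 else 0) * y j) * rho y ^ 3
        - ((if j = j then 1 else 0) * y i) * rho y ^ 3
        + 3 * y i * y j * y j * rho y ^ 5
      = (if j = i then -2 * y j * rho y ^ 3 else 0)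
          + (-(y i) * rho y ^ 3 + y j ^ 2 * (3 * y i * rho y ^ 5)) := by
    intro j
    by_cases h : j = i <;> simp [h] <;> ring
  rw [Finset.sum_congr rfl fun j _ => step j]
  rw [Finset.sum_add_distrib, Finset.sum_add_distrib, Finset.sum_const, ← Finset.sum_mul]
  simp only [Finset.sum_ite_eq', Finset.mem_univ, if_true]
  have hq : q y * rho y ^ 5 = rho y ^ 3 := by
    have h := q_rho_sq hy
    calc q y * rho y ^ 5 = q y * rho y ^ 2 * rho y ^ 3 := by ring
    _ = rho y ^ 3 := by rw [h, one_mul]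
  have hqdef : (∑ j, y j ^ 2) = q y := rfl
  rw [hqdef]
  simp only [Finset.card_univ, Fintype.card_fin, nsmul_eq_mul]
  push_cast
  linear_combination (3 * y i) * hq

end GJMSAux
namespace GJMSAux

variable {n : ℕ}

lemma hom_of_eq {m m' : ℤ} {f : Euc n → ℝ} (h : Hom m f) (hm : m = m') : Hom m' f := hm ▸ h

/-! ### the operators -/

def Lq (f : Euc n → ℝ) : Euc n → ℝ := fun y => q y * eucLap f y
def Df (i : Fin (n+1)) (f : Euc n → ℝ) : Euc n → ℝ :=
  fun y => q y * ∑ j, pd j (X i) y * pd j f y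
def Xf (i : Fin (n+1)) (f : Euc n → ℝ) : Euc n → ℝ := fun y => X i y * f y
def cc (n : ℕ) (j : ℕ) : ℝ := ((n:ℝ) - 2*j) * ((n:ℝ) + 2*j - 2) / 4
def Lr : ℕ → (Euc n → ℝ) → Euc n → ℝ
  | 0, f => f
  | k+1, f => fun y => -(Lq (Lr k f) y) + cc n (k+1) * Lr k f y

lemma nice_Lq {f : Euc n → ℝ} (hf : Nice 0 f) : Nice 0 (Lq f) := by
  constructor
  · exact SM.mul sm_q (sm_eucLap hf.1)
  · exact hom_of_eq ((hom_q).mul (hom_eucLap hf.1 hf.2)) (by decide)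

lemma nice_Df {f : Euc n → ℝ} (hf : Nice 0 f) (i : Fin (n+1)) : Nice 0 (Df i f) := by
  constructor
  · exact SM.mul sm_q (SM.sum Finset.univ fun j _ => SM.mul ((sm_X i).pd j) (hf.1.pd j))
  · refine hom_of_eq ((hom_q).mul (Hom.sum Finset.univ fun j _ =>
      (hom_pd (sm_X i) (hom_X i) j).mul (hom_pd hf.1 hf.2 j))) (by decide)

lemma nice_Xf {f : Euc n → ℝ} (hf : Nice 0 f) (i : Fin (n+1)) : Nice 0 (Xf i f) := by
  constructor
  · exact SM.mul (sm_X i) hf.1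
  · exact hom_of_eq ((hom_X i).mul hf.2) (by decide)

lemma nice_Lr {f : Euc n → ℝ} (hf : Nice 0 f) (k : ℕ) : Nice 0 (Lr k f) := by
  induction k with
  | zero => exact hf
  | succ m ih =>
      have h1 := nice_Lq ih
      constructor
      · exact SM.add (SM.neg h1.1) (SM.cmul _ ih.1)
      · exact Hom.add (Hom.neg h1.2) (Hom.cmul _ ih.2)

lemma Lq_Lr (k : ℕ) (f : Euc n → ℝ) (y : Euc n) :
    Lq (Lr k f) y = cc n (k+1) * Lr k f y - Lr (k+1) f y := by
  show _ = _ - (-(Lq (Lr k f) y) + cc n (k+1) * Lr k f y)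
  ring

lemma Lq_Lr_fun (k : ℕ) (f : Euc n → ℝ) :
    Lq (Lr k f) = fun y => cc n (k+1) * Lr k f y - Lr (k+1) f y :=
  funext fun y => Lq_Lr k f y

/-! ### relating sLap to Lq via homogeneity -/

lemma hom_apply_sphProj {m : ℤ} {f : Euc n → ℝ} (h : Hom m f) {y : Euc n} (hy : y ≠ 0) :
    f (sphProj y) = (‖y‖⁻¹) ^ m * f y := by
  have hc : (0:ℝ) < ‖y‖⁻¹ := by
    have := norm_pos_iff.2 hy
    positivity
  exact h _ hc y hy

lemma sLap_eq_Lq {f : Euc n → ℝ} (hf : Nice 0 f) {y : Euc n} (hy : y ≠ 0) :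
    sLap f y = Lq f y := by
  have h2 : Hom (0 - 2) (eucLap f) := hom_eucLap hf.1 hf.2
  have h3 := hom_apply_sphProj h2 hy
  have hn : ‖y‖ ≠ 0 := norm_ne_zero_iff.2 hy
  show eucLap f (sphProj y) = q y * eucLap f y
  rw [h3, q_eq_norm_sq]
  have : (‖y‖⁻¹) ^ ((0:ℤ) - 2) = ‖y‖ ^ 2 := by
    rw [zpow_sub₀ (inv_ne_zero hn)]
    field_simp
  rw [this]

/-! ### extension from the unit sphere -/

lemma ext_of_unit {f g : Euc n → ℝ} (hf : Hom 0 f) (hg : Hom 0 g)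
    (h : ∀ ζ : Euc n, ‖ζ‖ = 1 → f ζ = g ζ) : NZEq f g := by
  intro y hy
  have h1 := hom_apply_sphProj hf hy
  have h2 := hom_apply_sphProj hg hy
  simp only [zpow_zero, one_mul] at h1 h2
  rw [← h1, ← h2]
  exact h _ (sphProj_norm hy)

/-! ### Laplacian of q -/

lemma diff_coord (i : Fin (n+1)) (y : Euc n) : DifferentiableAt ℝ (fun z : Euc n => z i) y :=
  (EuclideanSpace.proj (𝕜 := ℝ) i).differentiableAt

lemma eucLap_q (y : Euc n) : eucLap (q (n := n)) y = 2 * ((n:ℝ) + 1) := by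
  unfold eucLap
  have key : ∀ j : Fin (n+1), pd j (pd j (q (n := n))) y = 2 := by
    intro j
    have h1 : pd j (q (n := n)) = fun z : Euc n => 2 * z j := by
      funext z
      exact pd_q z j
    rw [h1, pd_cmul (diff_coord j y) 2 j, pd_coord j y j]
    simp
  rw [Finset.sum_congr rfl fun j _ => key j, Finset.sum_const]
  simp [Finset.card_univ]
  ring

end GJMSAux
namespace GJMSAux

variable {n : ℕ}

lemma sum_delta_mul (i : Fin (n+1)) (A : Fin (n+1) → ℝ) :
    ∑ j, (if j = i then (1:ℝ) else 0) * A j = A i := by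
  have : ∀ j : Fin (n+1), (if j = i then (1:ℝ) else 0) * A j = if j = i then A j else 0 := by
    intro j; split_ifs <;> simp
  rw [Finset.sum_congr rfl fun j _ => this j]
  simp

lemma pd_X_unit {ζ : Euc n} (hζ : ‖ζ‖ = 1) (i j : Fin (n+1)) :
    pd j (X i) ζ = (if j = i then 1 else 0) - ζ i * ζ j := by
  rw [pd_X (unit_ne_zero hζ) i j, rho_unit hζ]
  ring

lemma euler0 {f : Euc n → ℝ} (hf : Nice 0 f) {ζ : Euc n} (hζ : ζ ≠ 0) :
    ∑ j, ζ j * pd j f ζ = 0 := by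
  have := euler hf.1 hf.2 hζ
  simpa using this

lemma sum_sq_unit {ζ : Euc n} (hζ : ‖ζ‖ = 1) : ∑ j, ζ j * ζ j = 1 := by
  have : ∑ j, ζ j * ζ j = q ζ := by
    unfold q
    exact Finset.sum_congr rfl fun j _ => (sq (ζ j)).symm
  rw [this, q_unit hζ]

/-- The key product rule: `Δ_sph (x f) = x Δ_sph f + 2 ⟨∇x, ∇f⟩ - n x f`. -/
lemma P1 {f : Euc n → ℝ} (hf : Nice 0 f) (i : Fin (n+1)) :
    NZEq (Lq (Xf i f))
      (fun y => X i y * Lq f y + 2 * Df i f y - (n:ℝ) * (X i y * f y)) := by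
  apply ext_of_unit (nice_Lq (nice_Xf hf i)).2
  · refine Hom.sub (Hom.add (hom_of_eq ((hom_X i).mul (nice_Lq hf).2) (by decide))
      (Hom.cmul 2 (nice_Df hf i).2)) (Hom.cmul _ (hom_of_eq ((hom_X i).mul hf.2) (by decide)))
  intro ζ hζ
  have hz : ζ ≠ 0 := unit_ne_zero hζ
  show q ζ * eucLap (Xf i f) ζ = _
  have hXf : Xf i f = fun z => X i z * f z := rfl
  rw [hXf, eucLap_mul (sm_X i) hf.1 hz, q_unit hζ, eucLap_X hz i, rho_unit hζ]
  show _ = X i ζ * (q ζ * eucLap f ζ) + 2 * (q ζ * ∑ j, pd j (X i) ζ * pd j f ζ)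
      - (n:ℝ) * (X i ζ * f ζ)
  rw [q_unit hζ, X_unit hζ]
  ring

end GJMSAux
namespace GJMSAux

variable {n : ℕ}

lemma sum_delta_mul' (i : Fin (n+1)) (A : Fin (n+1) → ℝ) :
    ∑ j, (if i = j then (1:ℝ) else 0) * A j = A i := by
  have : ∀ j : Fin (n+1), (if i = j then (1:ℝ) else 0) * A j = (if j = i then (1:ℝ) else 0) * A j := by
    intro j; simp [eq_comm]
  rw [Finset.sum_congr rfl fun j _ => this j, sum_delta_mul]

/-- Bochner-type commutation: `Δ_sph ⟨∇x,∇f⟩ = ⟨∇x, ∇ Δ_sph f⟩ + (n-2)⟨∇x,∇f⟩ - 2 x Δ_sph f`. -/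
lemma P2 {f : Euc n → ℝ} (hf : Nice 0 f) (i : Fin (n+1)) :
    NZEq (Lq (Df i f))
      (fun y => Df i (Lq f) y + ((n:ℝ) - 2) * Df i f y - 2 * (X i y * Lq f y)) := by
  apply ext_of_unit (nice_Lq (nice_Df hf i)).2
  · exact Hom.sub (Hom.add (nice_Df (nice_Lq hf) i).2 (Hom.cmul _ (nice_Df hf i).2))
      (Hom.cmul 2 (hom_of_eq ((hom_X i).mul (nice_Lq hf).2) (by decide)))
  intro ζ hζ
  have hz : ζ ≠ 0 := unit_ne_zero hζ
  set w : Euc n → ℝ := fun y => ∑ j, pd j (X i) y * pd j f y with hw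
  have sm_w : SM w := SM.sum Finset.univ fun j _ => SM.mul ((sm_X i).pd j) (hf.1.pd j)
  have hom_w : Hom (-2) w :=
    hom_of_eq (Hom.sum Finset.univ fun j _ =>
      (hom_pd (sm_X i) (hom_X i) j).mul (hom_pd hf.1 hf.2 j)) (by decide)
  -- unit-sphere value of w
  have h_w_unit : w ζ = pd i f ζ := by
    have hterm : ∀ j, pd j (X i) ζ * pd j f ζ
        = (if j = i then 1 else 0) * pd j f ζ - ζ i * (ζ j * pd j f ζ) := by
      intro j; rw [pd_X_unit hζ]; ring
    rw [hw]
    simp only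
    rw [Finset.sum_congr rfl fun j _ => hterm j, Finset.sum_sub_distrib, sum_delta_mul,
      ← Finset.mul_sum, euler0 hf hz]
    ring
  -- contraction identities
  have h_C1 : ∀ j, ∑ l, ζ l * pd l (pd j f) ζ = -(pd j f ζ) := by
    intro j
    have h := euler (hf.1.pd j) (hom_pd hf.1 hf.2 j) hz
    rw [h]
    push_cast
    ring
  have h_C2 : ∀ l, ∑ j, ζ j * pd l (pd j f) ζ = -(pd l f ζ) := by
    intro l
    have h0 : NZEq (fun y : Euc n => ∑ j, y j * pd j f y) (fun _ => 0) := by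
      intro z hz'
      simpa using euler hf.1 hf.2 hz'
    have h1 : pd l (fun y : Euc n => ∑ j, y j * pd j f y) ζ = 0 := by
      rw [pd_congr h0 hz l, pd_const]
    have h2 : pd l (fun y : Euc n => ∑ j, y j * pd j f y) ζ
        = ∑ j, ((if l = j then (1:ℝ) else 0) * pd j f ζ + ζ j * pd l (pd j f) ζ) := by
      rw [pd_sum Finset.univ (fun j _ => ((diff_coord j ζ).fun_mul ((hf.1.pd j).diffAt hz))) l]
      refine Finset.sum_congr rfl fun j _ => ?_
      rw [pd_mul (diff_coord j ζ) ((hf.1.pd j).diffAt hz) l, pd_coord j ζ l]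
    rw [h2, Finset.sum_add_distrib, sum_delta_mul' l] at h1
    linarith [h1]
  -- S1
  have h_lapa : ∀ j, eucLap (pd j (X i)) ζ
      = -(n:ℝ) * (if j = i then 1 else 0) + 3*(n:ℝ)*ζ i*ζ j := by
    intro j
    rw [eucLap_pd_comm (sm_X i) j ζ hz]
    have hcong : NZEq (eucLap (X i)) (fun y => -(n:ℝ) * (y i * rho y ^ 3)) := by
      intro z hz'
      rw [eucLap_X hz' i]
      ring
    rw [pd_congr hcong hz j]
    rw [pd_cmul (((sm_coord i).mul (sm_rho_pow 3)).diffAt hz) _ j]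
    rw [pd_mul ((sm_coord i).diffAt hz) ((sm_rho_pow 3).diffAt hz) j, pd_coord i ζ j,
      pd_rho_pow hz 3 j, rho_unit hζ]
    push_cast
    ring
  have h_S1 : ∑ j, eucLap (pd j (X i)) ζ * pd j f ζ = -(n:ℝ) * pd i f ζ := by
    have expand : ∀ j, eucLap (pd j (X i)) ζ * pd j f ζ
        = -(n:ℝ) * ((if j = i then (1:ℝ) else 0) * pd j f ζ)
          + (3*(n:ℝ)*ζ i) * (ζ j * pd j f ζ) := by
      intro j; rw [h_lapa j]; ring
    rw [Finset.sum_congr rfl fun j _ => expand j, Finset.sum_add_distrib,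
      ← Finset.mul_sum, ← Finset.mul_sum, sum_delta_mul, euler0 hf hz]
    ring
  -- S2
  have h_S2 : ∑ j, (∑ l, pd l (pd j (X i)) ζ * pd l (pd j f) ζ)
      = 2 * pd i f ζ - ζ i * eucLap f ζ := by
    have inner : ∀ j, ∑ l, pd l (pd j (X i)) ζ * pd l (pd j f) ζ
        = (if j = i then (1:ℝ) else 0) * pd j f ζ - ζ j * pd i (pd j f) ζ
          - ζ i * pd j (pd j f) ζ - 3 * ζ i * ζ j * pd j f ζ := by
      intro j
      have hterm : ∀ l, pd l (pd j (X i)) ζ * pd l (pd j f) ζ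
          = -((if j = i then (1:ℝ) else 0)) * (ζ l * pd l (pd j f) ζ)
            - (if l = i then (1:ℝ) else 0) * (ζ j * pd l (pd j f) ζ)
            - (if l = j then (1:ℝ) else 0) * (ζ i * pd l (pd j f) ζ)
            + (3 * ζ i * ζ j) * (ζ l * pd l (pd j f) ζ) := by
        intro l
        rw [pd_pd_X hz i j l, rho_unit hζ]
        ring
      rw [Finset.sum_congr rfl fun l _ => hterm l, Finset.sum_add_distrib,
        Finset.sum_sub_distrib, Finset.sum_sub_distrib, sum_delta_mul i, sum_delta_mul j,
        ← Finset.mul_sum, ← Finset.mul_sum, h_C1 j]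
      ring
    have expand2 : ∀ j, (if j = i then (1:ℝ) else 0) * pd j f ζ - ζ j * pd i (pd j f) ζ
          - ζ i * pd j (pd j f) ζ - 3 * ζ i * ζ j * pd j f ζ
        = ((if j = i then (1:ℝ) else 0) * pd j f ζ) - (ζ j * pd i (pd j f) ζ)
          - (ζ i * (pd j (pd j f) ζ)) - (3 * ζ i) * (ζ j * pd j f ζ) := by
      intro j; ring
    rw [Finset.sum_congr rfl fun j _ => (inner j).trans (expand2 j),
      Finset.sum_sub_distrib, Finset.sum_sub_distrib, Finset.sum_sub_distrib,
      sum_delta_mul, h_C2 i, ← Finset.mul_sum, ← Finset.mul_sum, euler0 hf hz]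
    have hlap : ∑ j, pd j (pd j f) ζ = eucLap f ζ := rfl
    rw [hlap]
    ring
  -- S3
  have h_S3 : ∑ j, pd j (X i) ζ * eucLap (pd j f) ζ
      = pd i (eucLap f) ζ + 2 * ζ i * eucLap f ζ := by
    have expand : ∀ j, pd j (X i) ζ * eucLap (pd j f) ζ
        = (if j = i then (1:ℝ) else 0) * pd j (eucLap f) ζ
          - ζ i * (ζ j * pd j (eucLap f) ζ) := by
      intro j
      rw [pd_X_unit hζ, eucLap_pd_comm hf.1 j ζ hz]
      ring
    rw [Finset.sum_congr rfl fun j _ => expand j, Finset.sum_sub_distrib, sum_delta_mul,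
      ← Finset.mul_sum]
    have heu := euler (sm_eucLap hf.1) (hom_eucLap hf.1 hf.2) hz
    rw [heu]
    push_cast
    ring
  -- assemble Δw
  have h_each : ∀ j : Fin (n+1), eucLap (fun y => pd j (X i) y * pd j f y) ζ
      = eucLap (pd j (X i)) ζ * pd j f ζ
        + 2 * (∑ l, pd l (pd j (X i)) ζ * pd l (pd j f) ζ)
        + pd j (X i) ζ * eucLap (pd j f) ζ :=
    fun j => eucLap_mul ((sm_X i).pd j) (hf.1.pd j) hz
  have h_lapw : eucLap w ζ = (4 - (n:ℝ)) * pd i f ζ + pd i (eucLap f) ζ := by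
    have h0 : eucLap w ζ = ∑ j, eucLap (fun y => pd j (X i) y * pd j f y) ζ := by
      rw [hw]
      exact eucLap_sum Finset.univ
        (fun j _ => SM.mul ((sm_X i).pd j) (hf.1.pd j)) hz
    rw [h0, Finset.sum_congr rfl fun j _ => h_each j, Finset.sum_add_distrib,
      Finset.sum_add_distrib, h_S1, h_S3, ← Finset.mul_sum, h_S2]
    ring
  -- middle term
  have h_mid : ∑ j, pd j (q (n := n)) ζ * pd j w ζ = -4 * w ζ := by
    have h1 : ∀ j : Fin (n+1), pd j (q (n := n)) ζ * pd j w ζ = 2 * (ζ j * pd j w ζ) := by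
      intro j; rw [pd_q]; ring
    rw [Finset.sum_congr rfl fun j _ => h1 j, ← Finset.mul_sum, euler sm_w hom_w hz]
    push_cast
    ring
  -- RHS pieces
  have h_pdLq : ∀ j, pd j (Lq f) ζ = 2 * ζ j * eucLap f ζ + pd j (eucLap f) ζ := by
    intro j
    show pd j (fun y => q y * eucLap f y) ζ = _
    rw [pd_mul (diff_q ζ) ((sm_eucLap hf.1).diffAt hz) j, pd_q, q_unit hζ]
    ring
  have h_RHS1 : Df i (Lq f) ζ = 2 * ζ i * eucLap f ζ + pd i (eucLap f) ζ := by
    show q ζ * ∑ j, pd j (X i) ζ * pd j (Lq f) ζ = _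
    rw [q_unit hζ, one_mul]
    have expand : ∀ j, pd j (X i) ζ * pd j (Lq f) ζ
        = (if j = i then (1:ℝ) else 0) * pd j (Lq f) ζ - ζ i * (ζ j * pd j (Lq f) ζ) := by
      intro j; rw [pd_X_unit hζ]; ring
    have hz2 : ∑ j, ζ j * pd j (Lq f) ζ = 0 := by
      have e2 : ∀ j, ζ j * pd j (Lq f) ζ
          = 2 * (ζ j * ζ j) * eucLap f ζ + ζ j * pd j (eucLap f) ζ := by
        intro j; rw [h_pdLq j]; ring
      rw [Finset.sum_congr rfl fun j _ => e2 j, Finset.sum_add_distrib]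
      have ha : ∑ j, 2 * (ζ j * ζ j) * eucLap f ζ = 2 * eucLap f ζ := by
        have : ∀ j, 2 * (ζ j * ζ j) * eucLap f ζ = (2 * eucLap f ζ) * (ζ j * ζ j) := by
          intro j; ring
        rw [Finset.sum_congr rfl fun j _ => this j, ← Finset.mul_sum, sum_sq_unit hζ, mul_one]
      have hb := euler (sm_eucLap hf.1) (hom_eucLap hf.1 hf.2) hz
      rw [ha, hb]
      push_cast
      ring
    rw [Finset.sum_congr rfl fun j _ => expand j, Finset.sum_sub_distrib, sum_delta_mul,
      ← Finset.mul_sum, hz2, h_pdLq i]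
    ring
  -- final assembly
  show q ζ * eucLap (Df i f) ζ = _
  have hDf : Df i f = fun y => q y * w y := rfl
  rw [hDf, eucLap_mul sm_q sm_w hz, eucLap_q, h_mid, h_lapw, q_unit hζ, h_w_unit]
  show _ = Df i (Lq f) ζ + ((n:ℝ) - 2) * Df i f ζ - 2 * (X i ζ * Lq f ζ)
  have hDfv : Df i f ζ = pd i f ζ := by
    show q ζ * w ζ = _
    rw [q_unit hζ, h_w_unit, one_mul]
  rw [h_RHS1, hDfv, X_unit hζ]
  show _ = _ - 2 * (ζ i * (q ζ * eucLap f ζ))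
  rw [q_unit hζ]
  ring

end GJMSAux
namespace GJMSAux

variable {n : ℕ}

lemma gjms_eq_Lr {u : Euc n → ℝ} (hu : Nice 0 u) (k : ℕ) :
    NZEq (gjms n k u) (Lr k u) := by
  induction k with
  | zero => exact fun y _ => rfl
  | succ m ih =>
      intro y hy
      show -(sLap (gjms n m u) y)
          + (((n : ℝ) - 2 * ((m:ℝ) + 1)) * ((n : ℝ) + 2 * ((m:ℝ) + 1) - 2) / 4) * gjms n m u y
          = -(Lq (Lr m u) y) + cc n (m+1) * Lr m u y
      have h1 : sLap (gjms n m u) y = sLap (Lr m u) y := by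
        show eucLap (gjms n m u) (sphProj y) = eucLap (Lr m u) (sphProj y)
        exact eucLap_congr ih (sphProj y) (sphProj_ne_zero hy)
      have h2 : sLap (Lr m u) y = Lq (Lr m u) y := sLap_eq_Lq (nice_Lr hu m) hy
      rw [h1, h2, ih y hy]
      have h3 : (((n : ℝ) - 2 * ((m:ℝ) + 1)) * ((n : ℝ) + 2 * ((m:ℝ) + 1) - 2) / 4)
          = cc n (m+1) := by
        unfold cc
        push_cast
        ring
      rw [h3]

lemma Df_lin {g h : Euc n → ℝ} (hg : SM g) (hh : SM h) (c : ℝ) (i : Fin (n+1))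
    {y : Euc n} (hy : y ≠ 0) :
    Df i (fun z => c * g z - h z) y = c * Df i g y - Df i h y := by
  have hpd : ∀ j, pd j (fun z => c * g z - h z) y = c * pd j g y - pd j h y := by
    intro j
    rw [pd_sub ((SM.cmul c hg).diffAt hy) (hh.diffAt hy) j, pd_cmul (hg.diffAt hy) c j]
  show q y * (∑ j, pd j (X i) y * pd j (fun z => c * g z - h z) y)
      = c * (q y * ∑ j, pd j (X i) y * pd j g y) - q y * ∑ j, pd j (X i) y * pd j h y
  have hterm : ∀ j, pd j (X i) y * pd j (fun z => c * g z - h z) y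
      = c * (pd j (X i) y * pd j g y) - pd j (X i) y * pd j h y := by
    intro j
    rw [hpd j]
    ring
  rw [Finset.sum_congr rfl fun j _ => hterm j, Finset.sum_sub_distrib, ← Finset.mul_sum]
  ring

def Acoef (n m : ℕ) : ℝ := ((m:ℝ) + 1) * ((n:ℝ) + 2 * (m:ℝ))
def Bcoef (m : ℕ) : ℝ := 2 * ((m:ℝ) + 1)

/-- The main commutator identity, in operator-representative form. -/
lemma MAIN {f : Euc n → ℝ} (hf : Nice 0 f) (i : Fin (n+1)) (m : ℕ) :
    NZEq (Lr (m+1) (Xf i f))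
      (fun y => X i y * Lr (m+1) f y + Acoef n m * (X i y * Lr m f y)
        - Bcoef m * Df i (Lr m f) y) := by
  induction m with
  | zero =>
      intro y hy
      show -(Lq (Lr 0 (Xf i f)) y) + cc n 1 * Lr 0 (Xf i f) y = _
      have e1 : Lq (Lr 0 (Xf i f)) y = X i y * Lq f y + 2 * Df i f y - (n:ℝ) * (X i y * f y) :=
        P1 hf i y hy
      have e5 : Lq f y = cc n 1 * f y - Lr 1 f y := Lq_Lr 0 f y
      have e0 : Lr 0 (Xf i f) y = X i y * f y := rfl
      rw [e1, e5, e0]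
      show _ = X i y * Lr 1 f y + Acoef n 0 * (X i y * f y) - Bcoef 0 * Df i f y
      unfold Acoef Bcoef
      push_cast
      ring
  | succ m IH =>
      intro y hy
      set g1 := Lr (m+1) f with hg1
      set g0 := Lr m f with hg0
      have ng1 : Nice 0 g1 := nice_Lr hf (m+1)
      have ng0 : Nice 0 g0 := nice_Lr hf m
      -- left side unfolds
      show -(Lq (Lr (m+1) (Xf i f)) y) + cc n (m+2) * Lr (m+1) (Xf i f) y = _
      -- congruence for the Laplacian term
      have h1 : eucLap (Lr (m+1) (Xf i f)) y
          = eucLap (fun z => X i z * g1 z + Acoef n m * (X i z * g0 z)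
              - Bcoef m * Df i g0 z) y :=
        eucLap_congr IH y hy
      have smF : SM (fun z : Euc n => X i z * g1 z + Acoef n m * (X i z * g0 z)) :=
        SM.add (SM.mul (sm_X i) ng1.1) (SM.cmul _ (SM.mul (sm_X i) ng0.1))
      have smG : SM (fun z : Euc n => Bcoef m * Df i g0 z) := SM.cmul _ (nice_Df ng0 i).1
      have h2 : eucLap (fun z => X i z * g1 z + Acoef n m * (X i z * g0 z)
              - Bcoef m * Df i g0 z) y
          = eucLap (fun z => X i z * g1 z) y + Acoef n m * eucLap (fun z => X i z * g0 z) y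
            - Bcoef m * eucLap (Df i g0) y := by
        rw [eucLap_sub smF smG hy,
          eucLap_add (SM.mul (sm_X i) ng1.1) (SM.cmul _ (SM.mul (sm_X i) ng0.1)) hy,
          eucLap_cmul (SM.mul (sm_X i) ng0.1) _ hy, eucLap_cmul (nice_Df ng0 i).1 _ hy]
      -- the three P-identities, phrased with q y * eucLap _
      have e1 : q y * eucLap (fun z : Euc n => X i z * g1 z) y
          = X i y * Lq g1 y + 2 * Df i g1 y - (n:ℝ) * (X i y * g1 y) := P1 ng1 i y hy
      have e2 : q y * eucLap (fun z : Euc n => X i z * g0 z) y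
          = X i y * Lq g0 y + 2 * Df i g0 y - (n:ℝ) * (X i y * g0 y) := P1 ng0 i y hy
      have e3 : q y * eucLap (Df i g0) y
          = Df i (Lq g0) y + ((n:ℝ) - 2) * Df i g0 y - 2 * (X i y * Lq g0 y) := P2 ng0 i y hy
      have e4 : Df i (Lq g0) y = cc n (m+1) * Df i g0 y - Df i g1 y := by
        rw [hg0, Lq_Lr_fun m f]
        exact Df_lin (nice_Lr hf m).1 (nice_Lr hf (m+1)).1 _ i hy
      have e5 : Lq g1 y = cc n (m+2) * g1 y - Lr (m+2) f y := Lq_Lr (m+1) f y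
      have e6 : Lq g0 y = cc n (m+1) * g0 y - g1 y := Lq_Lr m f y
      have hIH : Lr (m+1) (Xf i f) y
          = X i y * g1 y + Acoef n m * (X i y * g0 y) - Bcoef m * Df i g0 y := IH y hy
      have lq : Lq (Lr (m+1) (Xf i f)) y = q y * eucLap (Lr (m+1) (Xf i f)) y := rfl
      rw [hIH, lq, h1, h2]
      have distrib : q y * (eucLap (fun z : Euc n => X i z * g1 z) y
            + Acoef n m * eucLap (fun z : Euc n => X i z * g0 z) y
            - Bcoef m * eucLap (Df i g0) y)
          = q y * eucLap (fun z : Euc n => X i z * g1 z) y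
            + Acoef n m * (q y * eucLap (fun z : Euc n => X i z * g0 z) y)
            - Bcoef m * (q y * eucLap (Df i g0) y) := by ring
      rw [distrib, e1, e2, e3, e4, e5, e6]
      show _ = X i y * Lr (m+1+1) f y + Acoef n (m+1) * (X i y * Lr (m+1) f y)
          - Bcoef (m+1) * Df i (Lr (m+1) f) y
      rw [← hg1]
      unfold Acoef Bcoef cc
      push_cast
      ring

end GJMSAux
namespace GJMSAux

variable {n : ℕ}

lemma sum_X_sq {ζ : Euc n} (hζ : ‖ζ‖ = 1) : ∑ i, X i ζ * X i ζ = 1 := by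
  rw [Finset.sum_congr rfl fun i _ => by rw [X_unit hζ i]]
  exact sum_sq_unit hζ

lemma sum_X_Df {g : Euc n → ℝ} (hg : SM g) {ζ : Euc n} (hζ : ‖ζ‖ = 1) :
    ∑ i, X i ζ * Df i g ζ = 0 := by
  have hz : ζ ≠ 0 := unit_ne_zero hζ
  have inner0 : ∀ j, ∑ i, ζ i * pd j (X i) ζ = 0 := by
    intro j
    have hterm : ∀ i, ζ i * pd j (X i) ζ
        = (if j = i then (1:ℝ) else 0) * ζ i - ζ j * (ζ i * ζ i) := by
      intro i
      rw [pd_X_unit hζ i j]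
      ring
    rw [Finset.sum_congr rfl fun i _ => hterm i, Finset.sum_sub_distrib, sum_delta_mul' j,
      ← Finset.mul_sum, sum_sq_unit hζ]
    ring
  have step : ∀ i, X i ζ * Df i g ζ = ∑ j, ζ i * (pd j (X i) ζ * pd j g ζ) := by
    intro i
    show X i ζ * (q ζ * ∑ j, pd j (X i) ζ * pd j g ζ) = _
    rw [q_unit hζ, X_unit hζ, one_mul, Finset.mul_sum]
  rw [Finset.sum_congr rfl fun i _ => step i, Finset.sum_comm]
  have inner : ∀ j, ∑ i, ζ i * (pd j (X i) ζ * pd j g ζ)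
      = (∑ i, ζ i * pd j (X i) ζ) * pd j g ζ := by
    intro j
    rw [Finset.sum_mul]
    exact Finset.sum_congr rfl fun i _ => by ring
  rw [Finset.sum_congr rfl fun j _ => inner j]
  rw [Finset.sum_congr rfl fun j _ => by rw [inner0 j, zero_mul]]
  simp

end GJMSAux

open GJMSAux in
/-- `∑ᵢ xⁱ [L_{2k}, xⁱ] u = k (n + 2k - 2) L_{2k-2} u` on the round sphere. -/
theorem gjms_sum_commutator (n k : ℕ) (hk : 1 ≤ k)
    (u : Euc n → ℝ) (hu : IsSphFun u) :
    ∀ ζ : Euc n, ‖ζ‖ = 1 →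
      ∑ i, sCoord i ζ *
          (gjms n k (fun y => sCoord i y * u y) ζ - sCoord i ζ * gjms n k u ζ) =
        (k : ℝ) * ((n : ℝ) + 2 * k - 2) * gjms n (k - 1) u ζ := by
  intro ζ hζ
  have hz : ζ ≠ 0 := unit_ne_zero hζ
  obtain ⟨m, rfl⟩ : ∃ m, k = m + 1 := ⟨k - 1, (Nat.succ_pred_eq_of_pos hk).symm⟩
  have hu0 : Nice 0 u := ⟨hu.1, fun c hc y _ => by rw [hu.2 c hc y, zpow_zero, one_mul]⟩
  have hsc : ∀ (i : Fin (n+1)) (y : Euc n), sCoord i y = X i y :=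
    fun i y => (X_eq_sCoord i y).symm
  have hfun : ∀ i : Fin (n+1), (fun y => sCoord i y * u y) = Xf i u := by
    intro i
    funext y
    rw [hsc]
    rfl
  have key : ∀ i : Fin (n+1), gjms n (m+1) (fun y => sCoord i y * u y) ζ
      = X i ζ * Lr (m+1) u ζ + Acoef n m * (X i ζ * Lr m u ζ)
        - Bcoef m * Df i (Lr m u) ζ := by
    intro i
    rw [hfun i, gjms_eq_Lr (nice_Xf hu0 i) (m+1) ζ hz]
    exact MAIN hu0 i m ζ hz
  have hg : gjms n (m+1) u ζ = Lr (m+1) u ζ := gjms_eq_Lr hu0 (m+1) ζ hz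
  have hg0 : gjms n (m+1-1) u ζ = Lr m u ζ := by
    simp only [Nat.add_sub_cancel]
    exact gjms_eq_Lr hu0 m ζ hz
  have term : ∀ i : Fin (n+1), sCoord i ζ *
        (gjms n (m+1) (fun y => sCoord i y * u y) ζ - sCoord i ζ * gjms n (m+1) u ζ)
      = (Acoef n m * Lr m u ζ) * (X i ζ * X i ζ) - Bcoef m * (X i ζ * Df i (Lr m u) ζ) := by
    intro i
    rw [hsc i ζ, key i, hg]
    ring
  rw [Finset.sum_congr rfl fun i _ => term i, Finset.sum_sub_distrib, ← Finset.mul_sum,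
    ← Finset.mul_sum, sum_X_sq hζ, sum_X_Df (nice_Lr hu0 m).1 hζ, hg0]
  unfold Acoef
  push_cast
  ring
end
end

section
/- On the round $n$-sphere ($n>4$), the Dirichlet energy of $L_{\sigma_2}$ satisfies: for every smooth positive $u$ with $\sigma_1(u) > 0$, $\int_{S^n} u\,L_{\sigma_2}(u,u,u)\,d\mathrm{vol} > 0$. In particular, $\mathcal{E}_{\sigma_2}(u) \ge \tfrac{n(n-1)}{8}(\tfrac{n-4}{4})^3 \int_{S^n} u^4\,d\mathrm{vol} > 0$. -/
/-!
Functions on the round sphere `S^n ⊂ ℝ^{n+1}` (sectional curvature one) are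
represented by their 0-homogeneous extensions to `ℝ^{n+1} \ {0}`.  For such an
extension `u`, the Euclidean Laplacian evaluated on the unit sphere is the
Laplace–Beltrami operator of the round metric applied to `u|_{S^n}`.
-/

noncomputable section

open scoped RealInnerProductSpace

open MeasureTheory

/-- The surface measure of the unit sphere `S^n ⊂ ℝ^{n+1}`. -/
def sphMeasure (n : ℕ) : Measure (Metric.sphere (0 : Euc n) 1) :=
  (volume : Measure (Euc n)).toSphere

/-- `σ₁(u) = -((n-4)/8) Δ(u²) - |∇u|² + (n/2)((n-4)/4)² u²`. -/
def sigma1 (n : ℕ) (u : Euc n → ℝ) : Euc n → ℝ := fun y =>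
  -((((n : ℝ) - 4) / 8) * sLap (fun z => u z ^ 2) y) - sGrad2 u y
    + ((n : ℝ) / 2) * ((((n : ℝ) - 4) / 4)) ^ 2 * u y ^ 2

/-- The spherical divergence `δ(f du) = div(f ∇u)` on the round sphere: for
0-homogeneous `f, u` the vector field `f ∇u` is tangent to spheres and
homogeneous of degree `-1`, so its Euclidean divergence restricted to the unit
sphere is the spherical divergence. -/
def sDivGrad {n : ℕ} (f u : Euc n → ℝ) : Euc n → ℝ := fun y =>
  ∑ i, fderiv ℝ (fun z => f z * fderiv ℝ u z (EuclideanSpace.single i 1))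
        (sphProj y) (EuclideanSpace.single i 1)

/-- The diagonal `L_{σ₂}(u,u,u)` of the cubic `σ₂`-operator on the round sphere:
`½ δ(|∇u|² du) - ((n-4)/16)(u Δ|∇u|² - δ((Δu²) du)) - ((n-1)/4)((n-4)/4)² u Δu²
  + (n(n-1)/8)((n-4)/4)³ u³`. -/
def Lsigma2 (n : ℕ) (u : Euc n → ℝ) : Euc n → ℝ := fun y =>
  (1 / 2) * sDivGrad (sGrad2 u) u y
    - (((n : ℝ) - 4) / 16) *
        (u y * sLap (sGrad2 u) y - sDivGrad (sLap fun z => u z ^ 2) u y)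
    - (((n : ℝ) - 1) / 4) * ((((n : ℝ) - 4) / 4)) ^ 2 * u y * sLap (fun z => u z ^ 2) y
    + ((n : ℝ) * ((n : ℝ) - 1) / 8) * ((((n : ℝ) - 4) / 4)) ^ 3 * u y ^ 3

namespace S2
open MeasureTheory Metric Set Filter
open scoped ContDiff Topology

variable {n : ℕ}

lemma ne_zero_of_norm_one {y : Euc n} (h : ‖y‖ = 1) : y ≠ 0 := by
  intro h0; rw [h0] at h; simp at h

lemma sphProj_of_norm_one {y : Euc n} (h : ‖y‖ = 1) : sphProj y = y := by
  simp [sphProj, h]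

lemma norm_sphProj {y : Euc n} (h : y ≠ 0) : ‖sphProj y‖ = 1 := by
  have : ‖y‖ ≠ 0 := norm_ne_zero_iff.2 h
  simp [sphProj, norm_smul, abs_of_nonneg (norm_nonneg y), inv_mul_cancel₀ this]

lemma sphProj_ne_zero {y : Euc n} (h : y ≠ 0) : sphProj y ≠ 0 :=
  ne_zero_of_norm_one (norm_sphProj h)

lemma sphProj_smul {c : ℝ} (hc : 0 < c) (y : Euc n) : sphProj (c • y) = sphProj y := by
  simp only [sphProj, norm_smul, Real.norm_eq_abs, abs_of_pos hc, smul_smul, mul_inv_rev]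
  congr 1
  rcases eq_or_ne y 0 with rfl | hy
  · simp
  · rw [mul_assoc, mul_comm c⁻¹ c, mul_inv_cancel₀ hc.ne', mul_one]

/-- Abbreviation: smooth away from the origin. -/
abbrev Sm (f : Euc n → ℝ) : Prop := ContDiffOn ℝ ∞ f {y : Euc n | y ≠ 0}

lemma isOpen_ne0 : IsOpen {y : Euc n | y ≠ 0} := isOpen_ne

lemma Sm.differentiableAt {f : Euc n → ℝ} (hf : Sm f) {y : Euc n} (hy : y ≠ 0) :
    DifferentiableAt ℝ f y :=
  (hf.contDiffAt (isOpen_ne0.mem_nhds hy)).differentiableAt (by norm_num)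

lemma Sm.pd {f : Euc n → ℝ} (hf : Sm f) (i : Fin (n + 1)) : Sm (pd i f) := by
  have h := hf.fderiv_of_isOpen (m := ∞) isOpen_ne0 (le_of_eq (by rfl))
  exact h.clm_apply contDiffOn_const

lemma contDiffOn_sphProj : ContDiffOn ℝ ∞ (sphProj (n := n)) {y : Euc n | y ≠ 0} := by
  intro y hy
  have h1 : ContDiffAt ℝ ∞ (fun z : Euc n => ‖z‖⁻¹) y :=
    (contDiffAt_norm ℝ hy).inv (norm_ne_zero_iff.2 hy)
  exact (h1.smul contDiffAt_id).contDiffWithinAt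

lemma Sm.comp_sphProj {f : Euc n → ℝ} (hf : Sm f) :
    Sm (fun y : Euc n => f (sphProj y)) :=
  hf.comp contDiffOn_sphProj fun _ hy => sphProj_ne_zero hy

lemma euc_decomp (y : Euc n) : ∑ i, y i • EuclideanSpace.single i (1 : ℝ) = y := by
  ext j
  rw [WithLp.ofLp_sum, Finset.sum_apply]
  simp [EuclideanSpace.single_apply]

lemma fderiv_apply_eq_sum (f : Euc n → ℝ) (z y : Euc n) :
    fderiv ℝ f z y = ∑ i, y i * fderiv ℝ f z (EuclideanSpace.single i 1) := by
  conv_lhs => rw [← euc_decomp y]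
  rw [map_sum]
  simp [smul_eq_mul]

/-- Derivative scaling for homogeneous functions. -/
lemma fderiv_shomog {f : Euc n → ℝ} (hf : Sm f) {m : ℝ → ℝ}
    (hm : ∀ c : ℝ, 0 < c → ∀ y : Euc n, y ≠ 0 → f (c • y) = m c * f y)
    {c : ℝ} (hc : 0 < c) {y : Euc n} (hy : y ≠ 0) (v : Euc n) :
    fderiv ℝ f (c • y) v = c⁻¹ * (m c * fderiv ℝ f y v) := by
  have hcy : c • y ≠ 0 := smul_ne_zero hc.ne' hy
  have hdy := hf.differentiableAt hy
  have hdcy := hf.differentiableAt hcy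
  have h1 : HasFDerivAt (fun z : Euc n => f (c • z))
      ((fderiv ℝ f (c • y)).comp (c • ContinuousLinearMap.id ℝ (Euc n))) y :=
    HasFDerivAt.comp y hdcy.hasFDerivAt ((hasFDerivAt_id y).const_smul c)
  have h2 : HasFDerivAt (fun z : Euc n => f (c • z)) (m c • fderiv ℝ f y) y := by
    have h3 : HasFDerivAt (fun z : Euc n => m c * f z) (m c • fderiv ℝ f y) y :=
      hdy.hasFDerivAt.const_mul (m c)
    apply h3.congr_of_eventuallyEq
    filter_upwards [isOpen_ne0.mem_nhds hy] with z hz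
    exact hm c hc z hz
  have h4 := h1.unique h2
  have h5 := congrArg (fun L : Euc n →L[ℝ] ℝ => L v) h4
  simp only [ContinuousLinearMap.coe_comp', Function.comp_apply,
    ContinuousLinearMap.smul_apply, ContinuousLinearMap.coe_smul',
    Pi.smul_apply, ContinuousLinearMap.coe_id', id_eq, smul_eq_mul] at h5
  have h6 := (fderiv ℝ f (c • y)).map_smul c v
  simp only [smul_eq_mul] at h6
  rw [h6] at h5
  field_simp at h5 ⊢
  linarith

lemma fderiv_self_eq_zero {f : Euc n → ℝ} (hf : Sm f)
    (hh : ∀ c : ℝ, 0 < c → ∀ y, f (c • y) = f y) {y : Euc n} (hy : y ≠ 0) :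
    fderiv ℝ f y y = 0 := by
  have hdy := hf.differentiableAt hy
  have hc : HasDerivAt (fun t : ℝ => t • y) y 1 := by
    simpa using (hasDerivAt_id (1 : ℝ)).smul_const y
  have hfd : HasFDerivAt f (fderiv ℝ f y) ((1 : ℝ) • y) := by
    rw [one_smul]; exact hdy.hasFDerivAt
  have hcomp : HasDerivAt (fun t : ℝ => f (t • y)) (fderiv ℝ f y y) 1 := by
    simpa [Function.comp_def] using hfd.comp_hasDerivAt 1 hc
  have hconst : HasDerivAt (fun _ : ℝ => f y) (0 : ℝ) 1 := hasDerivAt_const 1 (f y)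
  have heq : HasDerivAt (fun t : ℝ => f (t • y)) (0 : ℝ) 1 := by
    apply hconst.congr_of_eventuallyEq
    filter_upwards [isOpen_Ioi.mem_nhds (show (0:ℝ) < 1 from one_pos)] with t ht
    exact hh t ht y
  exact hcomp.unique heq

lemma euler_tangent {f : Euc n → ℝ} (hf : Sm f)
    (hh : ∀ c : ℝ, 0 < c → ∀ y, f (c • y) = f y) {y : Euc n} (hy : y ≠ 0) :
    ∑ i, y i * pd i f y = 0 := by
  have := fderiv_apply_eq_sum f y y
  rw [fderiv_self_eq_zero hf hh hy] at this
  simp only [pd]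
  linarith [this]

end S2
namespace S2
open MeasureTheory Metric Set Filter Function
open scoped ContDiff Topology

variable {n : ℕ}

/-- Bump function on ℝ: support `(1,3)`, equal to 1 on `[3/2, 5/2]`. -/
def bump : ContDiffBump (2 : ℝ) := ⟨1/2, 1, by norm_num, by norm_num⟩

lemma bump_rIn : bump.rIn = 1/2 := rfl
lemma bump_rOut : bump.rOut = 1 := rfl

lemma bump_zero_of_le_one {r : ℝ} (hr : r ≤ 1) : bump r = 0 :=
  bump.zero_of_le_dist (by
    rw [bump_rOut, Real.dist_eq, abs_of_nonpos (by linarith)]; linarith)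

lemma bump_zero_of_ge {r : ℝ} (hr : 3 ≤ r) : bump r = 0 :=
  bump.zero_of_le_dist (by
    rw [bump_rOut, Real.dist_eq, abs_of_nonneg (by linarith)]; linarith)

lemma bump_one {r : ℝ} (h1 : 3/2 ≤ r) (h2 : r ≤ 5/2) : bump r = 1 :=
  bump.one_of_mem_closedBall (by
    rw [mem_closedBall, Real.dist_eq, bump_rIn, abs_le]
    constructor <;> linarith)

/-- The smooth compactly supported localization of a vector field component. -/
def locz (V : Euc n → ℝ) : Euc n → ℝ := fun y => bump (‖y‖ ^ 2) * V y

lemma locz_zero_near_zero (V : Euc n → ℝ) {y : Euc n} (hy : ‖y‖ < 1) : locz V y = 0 := by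
  have : ‖y‖ ^ 2 ≤ 1 := by nlinarith [norm_nonneg y]
  simp [locz, bump_zero_of_le_one this]

lemma contDiff_locz {V : Euc n → ℝ} (hV : Sm V) : ContDiff ℝ ∞ (locz V) := by
  rw [contDiff_iff_contDiffAt]
  intro y
  rcases lt_or_ge ‖y‖ (1/2 : ℝ) with hy | hy
  · have hmem : Metric.ball (0 : Euc n) (1/2) ∈ 𝓝 y := by
      refine Metric.isOpen_ball.mem_nhds ?_
      simpa [mem_ball, dist_zero_right] using hy
    have : locz V =ᶠ[𝓝 y] fun _ => (0 : ℝ) := by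
      filter_upwards [hmem] with z hz
      exact locz_zero_near_zero V (lt_trans (by simpa [dist_zero_right] using hz) (by norm_num))
    exact contDiffAt_const.congr_of_eventuallyEq this
  · have hy0 : y ≠ 0 := by intro h; rw [h] at hy; simp at hy; linarith
    have h1 : ContDiffAt ℝ ∞ (fun z : Euc n => bump (‖z‖ ^ 2)) y :=
      ContDiffAt.comp (g := ⇑bump) (f := fun z : Euc n => ‖z‖ ^ 2) y
        bump.contDiffAt ((contDiff_norm_sq (𝕜 := ℝ) (E := Euc n)).contDiffAt)
    exact h1.mul (hV.contDiffAt (isOpen_ne0.mem_nhds hy0))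

lemma hasCompactSupport_locz (V : Euc n → ℝ) : HasCompactSupport (locz V) := by
  apply HasCompactSupport.intro (isCompact_closedBall (0 : Euc n) 2)
  intro y hy
  have : (2:ℝ) < ‖y‖ := by simpa [mem_closedBall, dist_zero_right, not_le] using hy
  have h4 : (3:ℝ) ≤ ‖y‖ ^ 2 := by nlinarith
  simp [locz, bump_zero_of_ge h4]

/-- The integral of each partial derivative of the localization vanishes. -/
lemma integral_pd_locz {V : Euc n → ℝ} (hV : Sm V) (i : Fin (n + 1)) :
    ∫ y : Euc n, fderiv ℝ (locz V) y (EuclideanSpace.single i 1) = 0 := by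
  set v : Euc n := EuclideanSpace.single i 1
  have hcd := contDiff_locz hV
  have hdiff : Differentiable ℝ (locz V) := hcd.differentiable (by norm_num)
  have hcsupp := hasCompactSupport_locz V
  have hcont : Continuous fun y => fderiv ℝ (locz V) y v :=
    (ContinuousLinearMap.apply ℝ ℝ v).continuous.comp (hcd.continuous_fderiv (by norm_num))
  have hsupp : HasCompactSupport fun y => fderiv ℝ (locz V) y v := by
    exact hcsupp.fderiv_apply (𝕜 := ℝ) v
  have hint : Integrable (fun y => fderiv ℝ (locz V) y v) volume :=
    hcont.integrable_of_hasCompactSupport hsupp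
  have hint2 : Integrable (locz V) volume :=
    (hcd.continuous).integrable_of_hasCompactSupport hcsupp
  have h1 : Integrable (fun y : Euc n => fderiv ℝ (locz V) y v * (1:ℝ)) volume := by
    simpa using hint
  have h2 : Integrable
      (fun y : Euc n => locz V y * fderiv ℝ (fun _ : Euc n => (1:ℝ)) y v) volume := by
    simp only [fderiv_fun_const, Pi.zero_apply, ContinuousLinearMap.zero_apply, mul_zero]
    exact integrable_zero _ _ _
  have h3 : Integrable (fun y : Euc n => locz V y * (1:ℝ)) volume := by
    simpa using hint2
  have h := integral_mul_fderiv_eq_neg_fderiv_mul_of_integrable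
    (μ := (volume : Measure (Euc n))) (f := locz V) (g := fun _ : Euc n => (1:ℝ)) (v := v)
    h1 h2 h3 (fun x _ => hdiff x) (fun x _ => differentiableAt_const 1)
  simp only [fderiv_fun_const, Pi.zero_apply, ContinuousLinearMap.zero_apply, mul_zero,
    integral_zero, mul_one] at h
  linarith [h]

end S2
namespace S2
open MeasureTheory Metric Set Filter Function
open scoped ContDiff Topology

variable {n : ℕ}

lemma integrable_fderiv_locz {V : Euc n → ℝ} (hV : Sm V) (v : Euc n) :
    Integrable (fun y => fderiv ℝ (locz V) y v) (volume : Measure (Euc n)) := by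
  have hcd := contDiff_locz hV
  have hcont : Continuous fun y => fderiv ℝ (locz V) y v :=
    (ContinuousLinearMap.apply ℝ ℝ v).continuous.comp (hcd.continuous_fderiv (by norm_num))
  exact hcont.integrable_of_hasCompactSupport
    ((hasCompactSupport_locz V).fderiv_apply (𝕜 := ℝ) v)

lemma sum_pd_locz {V : Fin (n+1) → Euc n → ℝ} (hsm : ∀ i, Sm (V i))
    (htan : ∀ y : Euc n, y ≠ 0 → ∑ i, y i * V i y = 0) (y : Euc n) :
    ∑ i, fderiv ℝ (locz (V i)) y (EuclideanSpace.single i 1)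
      = bump (‖y‖ ^ 2) * ∑ i, pd i (V i) y := by
  rcases eq_or_ne y 0 with rfl | hy
  · have hz : ∀ i : Fin (n+1),
        fderiv ℝ (locz (V i)) 0 (EuclideanSpace.single i 1) = 0 := by
      intro i
      have hev : locz (V i) =ᶠ[𝓝 (0 : Euc n)] fun _ => (0:ℝ) := by
        filter_upwards [Metric.ball_mem_nhds (0 : Euc n) one_pos] with z hz
        exact locz_zero_near_zero (V i) (by simpa [dist_zero_right] using hz)
      rw [hev.fderiv_eq]
      simp
    have hb : bump (‖(0 : Euc n)‖ ^ 2) = 0 := bump_zero_of_le_one (by simp)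
    rw [Finset.sum_eq_zero fun i _ => hz i, hb, zero_mul]
  · have hN : HasFDerivAt (fun z : Euc n => ‖z‖ ^ 2) (2 • innerSL ℝ y) y :=
      (hasStrictFDerivAt_norm_sq y).hasFDerivAt
    have hbd : HasDerivAt (⇑bump) (deriv (⇑bump) (‖y‖ ^ 2)) (‖y‖ ^ 2) :=
      ((bump.contDiff (n := 1)).differentiable (by simp)).differentiableAt.hasDerivAt
    have hcomp : HasFDerivAt (fun z : Euc n => bump (‖z‖ ^ 2))
        (deriv (⇑bump) (‖y‖ ^ 2) • (2 • innerSL ℝ y)) y :=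
      by have := hbd.comp_hasFDerivAt y hN; exact this
    have hterm : ∀ i : Fin (n+1),
        fderiv ℝ (locz (V i)) y (EuclideanSpace.single i 1)
          = bump (‖y‖ ^ 2) * pd i (V i) y
            + V i y * (deriv (⇑bump) (‖y‖ ^ 2) * (2 * y i)) := by
      intro i
      have hdV := (hsm i).differentiableAt hy
      have hmul := hcomp.mul hdV.hasFDerivAt
      have hfd : fderiv ℝ (locz (V i)) y
          = bump (‖y‖ ^ 2) • fderiv ℝ (V i) y
            + V i y • deriv (⇑bump) (‖y‖ ^ 2) • 2 • innerSL ℝ y := by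
        have : locz (V i) = fun z : Euc n => bump (‖z‖ ^ 2) * V i z := rfl
        rw [this]
        exact hmul.fderiv
      rw [hfd]
      have hip : (innerSL ℝ y) (EuclideanSpace.single i (1:ℝ)) = y i := by
        simp [EuclideanSpace.inner_single_right]
      simp only [ContinuousLinearMap.add_apply, ContinuousLinearMap.smul_apply,
        ContinuousLinearMap.coe_smul', Pi.smul_apply, smul_eq_mul, hip, pd]
      ring
    rw [Finset.sum_congr rfl fun i _ => hterm i, Finset.sum_add_distrib,
      ← Finset.mul_sum]
    have h2 : ∑ i, V i y * (deriv (⇑bump) (‖y‖ ^ 2) * (2 * y i))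
        = (deriv (⇑bump) (‖y‖ ^ 2) * 2) * ∑ i, y i * V i y := by
      rw [Finset.mul_sum]; congr 1; funext i; ring
    rw [h2, htan y hy, mul_zero, add_zero]

lemma integral_bump_div_eq_zero {V : Fin (n+1) → Euc n → ℝ} (hsm : ∀ i, Sm (V i))
    (htan : ∀ y : Euc n, y ≠ 0 → ∑ i, y i * V i y = 0) :
    ∫ y : Euc n, bump (‖y‖ ^ 2) * ∑ i, pd i (V i) y = 0 := by
  have h1 : ∫ y : Euc n, bump (‖y‖ ^ 2) * ∑ i, pd i (V i) y
      = ∫ y : Euc n, ∑ i, fderiv ℝ (locz (V i)) y (EuclideanSpace.single i 1) := by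
    congr 1; funext y; exact (sum_pd_locz hsm htan y).symm
  rw [h1, integral_finset_sum _ fun i _ => integrable_fderiv_locz (hsm i) _]
  exact Finset.sum_eq_zero fun i _ => integral_pd_locz (hsm i) i

lemma integral_volumeIoiPow (G : ℝ → ℝ) :
    ∫ r : Ioi (0:ℝ), G r ∂(Measure.volumeIoiPow n) = ∫ r in Ioi (0:ℝ), r ^ n * G r := by
  rw [Measure.volumeIoiPow]
  simp only [ENNReal.ofReal]
  rw [integral_withDensity_eq_integral_smul
      ((measurable_subtype_coe.pow_const _).real_toNNReal),
    integral_subtype_comap measurableSet_Ioi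
      (fun a : ℝ => Real.toNNReal (a ^ n) • G a)]
  refine setIntegral_congr_fun measurableSet_Ioi fun x hx => ?_
  rw [NNReal.smul_def, Real.coe_toNNReal _ (pow_nonneg hx.out.le _), smul_eq_mul]

lemma integral_sphere_polar (D : Euc n → ℝ) (G : ℝ → ℝ) :
    ∫ y : Euc n, G ‖y‖ * D (sphProj y)
      = (∫ ζ : Metric.sphere (0:Euc n) 1, D (ζ : Euc n) ∂(sphMeasure n))
          * ∫ r in Ioi (0:ℝ), r ^ n * G r := by
  have hfr : Module.finrank ℝ (Euc n) - 1 = n := by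
    simp [finrank_euclideanSpace_fin]
  have h0 : ∫ x : ({0}ᶜ : Set (Euc n)), G ‖(x : Euc n)‖ * D (sphProj (x : Euc n))
        ∂((volume : Measure (Euc n)).comap Subtype.val)
      = ∫ y : Euc n, G ‖y‖ * D (sphProj y) := by
    rw [integral_subtype_comap (measurableSet_singleton (0 : Euc n)).compl
        (fun y : Euc n => G ‖y‖ * D (sphProj y)), restrict_compl_singleton]
  have hmp := (volume : Measure (Euc n)).measurePreserving_homeomorphUnitSphereProd
  have h1 := hmp.integral_comp (Homeomorph.measurableEmbedding _)
      (fun p : Metric.sphere (0:Euc n) 1 × Ioi (0:ℝ) => D (p.1 : Euc n) * G (p.2 : ℝ))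
  have h2 : ∀ x : ({0}ᶜ : Set (Euc n)),
      G ‖(x : Euc n)‖ * D (sphProj (x : Euc n))
      = D (((homeomorphUnitSphereProd (Euc n)) x).1 : Euc n)
        * G (((homeomorphUnitSphereProd (Euc n)) x).2 : ℝ) := by
    intro x
    rw [homeomorphUnitSphereProd_apply_fst_coe, homeomorphUnitSphereProd_apply_snd_coe]
    rw [mul_comm]; rfl
  calc ∫ y : Euc n, G ‖y‖ * D (sphProj y)
      = ∫ x : ({0}ᶜ : Set (Euc n)), G ‖(x : Euc n)‖ * D (sphProj (x : Euc n))
          ∂((volume : Measure (Euc n)).comap Subtype.val) := h0.symm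
    _ = ∫ x : ({0}ᶜ : Set (Euc n)),
          D (((homeomorphUnitSphereProd (Euc n)) x).1 : Euc n)
            * G (((homeomorphUnitSphereProd (Euc n)) x).2 : ℝ)
          ∂((volume : Measure (Euc n)).comap Subtype.val) :=
        integral_congr_ae (Eventually.of_forall fun x => h2 x)
    _ = ∫ p : Metric.sphere (0:Euc n) 1 × Ioi (0:ℝ), D (p.1 : Euc n) * G (p.2 : ℝ)
          ∂((volume : Measure (Euc n)).toSphere.prod
              (Measure.volumeIoiPow (Module.finrank ℝ (Euc n) - 1))) := h1
    _ = (∫ ζ : Metric.sphere (0:Euc n) 1, D (ζ : Euc n)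
            ∂(volume : Measure (Euc n)).toSphere)
          * ∫ r : Ioi (0:ℝ), G (r : ℝ)
              ∂(Measure.volumeIoiPow (Module.finrank ℝ (Euc n) - 1)) :=
        integral_prod_mul (f := fun ζ : Metric.sphere (0:Euc n) 1 => D (ζ : Euc n))
          (g := fun r : Ioi (0:ℝ) => G (r : ℝ))
    _ = (∫ ζ : Metric.sphere (0:Euc n) 1, D (ζ : Euc n) ∂(sphMeasure n))
          * ∫ r in Ioi (0:ℝ), r ^ n * G r := by
        rw [hfr, integral_volumeIoiPow]
        rfl

lemma weight_pos (G : ℝ → ℝ) (hG : G = fun r => bump (r ^ 2) * (r⁻¹ * r⁻¹)) :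
    0 < ∫ r in Ioi (0:ℝ), r ^ n * G r := by
  subst hG
  set Q : ℝ → ℝ := fun r => r ^ n * (bump (r ^ 2) * (r⁻¹ * r⁻¹)) with hQ
  have hQ0 : ∀ r ∈ Ioi (0:ℝ) \ Icc (1:ℝ) 2, Q r = 0 := by
    intro r hr
    rcases hr with ⟨hr1, hr2⟩
    simp only [mem_Icc, not_and_or, not_le] at hr2
    rcases hr2 with h | h
    · have : r ^ 2 ≤ 1 := by nlinarith [mem_Ioi.1 hr1]
      simp [hQ, bump_zero_of_le_one this]
    · have : (3:ℝ) ≤ r ^ 2 := by nlinarith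
      simp [hQ, bump_zero_of_ge this]
  have hQc : ContinuousOn Q (Icc (1:ℝ) 2) := by
    have h1 : ContinuousOn (fun r : ℝ => r ^ n) (Icc (1:ℝ) 2) :=
      (continuous_pow n).continuousOn
    have h2 : ContinuousOn (fun r : ℝ => (bump (r ^ 2) : ℝ)) (Icc (1:ℝ) 2) :=
      (bump.continuous.comp (continuous_pow 2)).continuousOn
    have h3 : ContinuousOn (fun r : ℝ => r⁻¹) (Icc (1:ℝ) 2) := by
      apply ContinuousOn.inv₀ continuousOn_id
      intro x hx; exact ne_of_gt (lt_of_lt_of_le one_pos hx.1)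
    exact h1.mul (h2.mul (h3.mul h3))
  have hQint : IntegrableOn Q (Ioi (0:ℝ)) := by
    have hIcc : IntegrableOn Q (Icc (1:ℝ) 2) := hQc.integrableOn_compact isCompact_Icc
    have hdiff : IntegrableOn Q (Ioi (0:ℝ) \ Icc (1:ℝ) 2) := by
      have h0 : IntegrableOn (fun _ : ℝ => (0:ℝ)) (Ioi (0:ℝ) \ Icc (1:ℝ) 2) :=
        integrableOn_zero
      exact h0.congr_fun (fun r hr => (hQ0 r hr).symm)
        (measurableSet_Ioi.diff measurableSet_Icc)
    exact (hdiff.union hIcc).mono_set fun r hr => by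
      by_cases h : r ∈ Icc (1:ℝ) 2
      · exact Or.inr h
      · exact Or.inl ⟨hr, h⟩
  have hnonneg : ∀ r ∈ Ioi (0:ℝ), (0:ℝ) ≤ Q r := by
    intro r hr
    have h1 : (0:ℝ) ≤ r := (mem_Ioi.1 hr).le
    exact mul_nonneg (pow_nonneg h1 n) (mul_nonneg (bump.nonneg' _)
      (mul_nonneg (inv_nonneg.2 h1) (inv_nonneg.2 h1)))
  have hsub : Icc (5/4:ℝ) (3/2) ⊆ Ioi (0:ℝ) := fun x hx =>
    lt_of_lt_of_le (by norm_num) hx.1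
  have hlow : ∀ r ∈ Icc (5/4:ℝ) (3/2), (4/9:ℝ) ≤ Q r := by
    intro r hr
    obtain ⟨h1, h2⟩ := hr
    have hb : bump (r ^ 2) = 1 := bump_one (by nlinarith) (by nlinarith)
    have hrpos : (0:ℝ) < r := by linarith
    have hpow : (1:ℝ) ≤ r ^ n := one_le_pow₀ (by linarith)
    have hid : r * r⁻¹ = 1 := mul_inv_cancel₀ hrpos.ne'
    have hinv : (2/3:ℝ) ≤ r⁻¹ := by nlinarith
    have h4 : (4/9:ℝ) ≤ r⁻¹ * r⁻¹ := by nlinarith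
    have h5 : (0:ℝ) ≤ r⁻¹ * r⁻¹ := by nlinarith
    calc (4/9:ℝ) ≤ 1 * (r⁻¹ * r⁻¹) := by linarith
      _ ≤ r ^ n * (r⁻¹ * r⁻¹) := mul_le_mul_of_nonneg_right hpow h5
      _ = Q r := by rw [hQ]; simp only [hb, one_mul]
  have hIccInt : IntegrableOn Q (Icc (5/4:ℝ) (3/2)) := hQint.mono_set hsub
  have h5 := setIntegral_ge_of_const_le (μ := volume) measurableSet_Icc
    (by rw [Real.volume_Icc]; exact ENNReal.ofReal_ne_top) hlow hIccInt
  have h6 : ∫ r in Icc (5/4:ℝ) (3/2), Q r ≤ ∫ r in Ioi (0:ℝ), Q r :=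
    setIntegral_mono_set hQint
      ((ae_restrict_iff' measurableSet_Ioi).2 (Eventually.of_forall hnonneg))
      (HasSubset.Subset.eventuallyLE hsub)
  have hmeas : (volume (Icc (5/4:ℝ) (3/2))).toReal = 1/4 := by
    rw [Real.volume_Icc, ENNReal.toReal_ofReal (by norm_num)]; norm_num
  rw [measureReal_def, hmeas, smul_eq_mul] at h5
  have : (0:ℝ) < 4/9 * (1/4) := by norm_num
  linarith

lemma integral_sphere_div_eq_zero (V : Fin (n+1) → Euc n → ℝ)
    (hsm : ∀ i, Sm (V i))
    (hhom : ∀ i, ∀ c : ℝ, 0 < c → ∀ y : Euc n, y ≠ 0 → V i (c • y) = c⁻¹ * V i y)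
    (htan : ∀ y : Euc n, y ≠ 0 → ∑ i, y i * V i y = 0) :
    ∫ ζ : Metric.sphere (0 : Euc n) 1, (∑ i, pd i (V i) (ζ : Euc n)) ∂(sphMeasure n)
      = 0 := by
  set D : Euc n → ℝ := fun y => ∑ i, pd i (V i) y with hD
  set G : ℝ → ℝ := fun r => bump (r ^ 2) * (r⁻¹ * r⁻¹) with hGdef
  have hE : ∫ y : Euc n, bump (‖y‖ ^ 2) * D y = 0 := integral_bump_div_eq_zero hsm htan
  have hpt : ∀ y : Euc n, bump (‖y‖ ^ 2) * D y = G ‖y‖ * D (sphProj y) := by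
    intro y
    rcases eq_or_ne y 0 with rfl | hy
    · have hb : (bump (0:ℝ) : ℝ) = 0 := bump_zero_of_le_one (by norm_num)
      simp [hGdef, hb]
    · have hnorm : ‖y‖ ≠ 0 := norm_ne_zero_iff.2 hy
      have hrec : (‖y‖ : ℝ) • sphProj y = y := by
        rw [sphProj, smul_smul, mul_inv_cancel₀ hnorm, one_smul]
      have hhomD : D y = ‖y‖⁻¹ * (‖y‖⁻¹ * D (sphProj y)) := by
        conv_lhs => rw [← hrec]
        rw [hD]
        simp only
        rw [Finset.mul_sum, Finset.mul_sum]
        refine Finset.sum_congr rfl fun i _ => ?_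
        have hh := fderiv_shomog (hsm i) (m := fun c => c⁻¹) (hhom i)
          (norm_pos_iff.2 hy) (sphProj_ne_zero hy) (EuclideanSpace.single i 1)
        rw [pd, pd, hh]
      rw [hhomD, hGdef]
      ring
  have hG0 : ∫ y : Euc n, G ‖y‖ * D (sphProj y) = 0 := by
    rw [← hE]; exact integral_congr_ae (Eventually.of_forall fun y => (hpt y).symm)
  rw [integral_sphere_polar D G] at hG0
  have hK := weight_pos (n := n) G hGdef
  rcases mul_eq_zero.1 hG0 with h | h
  · exact h
  · exact absurd h hK.ne'

end S2
namespace S2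
open MeasureTheory Metric Set Filter Function
open scoped ContDiff Topology

variable {n : ℕ}

/-- Smooth positively-0-homogeneous functions. -/
structure SF (f : Euc n → ℝ) : Prop where
  sm : Sm f
  hom : ∀ c : ℝ, 0 < c → ∀ y : Euc n, f (c • y) = f y

lemma SF.one : SF (fun _ : Euc n => (1:ℝ)) := ⟨contDiffOn_const, fun _ _ _ => rfl⟩

lemma SF.mul {f g : Euc n → ℝ} (hf : SF f) (hg : SF g) : SF (fun y => f y * g y) :=
  ⟨hf.sm.mul hg.sm, fun c hc y => by rw [hf.hom c hc y, hg.hom c hc y]⟩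

lemma SF.of_isSphFun {u : Euc n → ℝ} (hu : IsSphFun u) : SF u :=
  ⟨hu.1.of_le (by simp), hu.2⟩

lemma SF.sq {u : Euc n → ℝ} (hu : SF u) : SF (fun y => u y ^ 2) :=
  ⟨hu.sm.pow 2, fun c hc y => by rw [hu.hom c hc y]⟩

lemma SF.compProj {f : Euc n → ℝ} (hf : Sm f) : SF (fun y => f (sphProj y)) :=
  ⟨hf.comp_sphProj, fun c hc y => by rw [sphProj_smul hc]⟩

lemma Sm.eucLap {f : Euc n → ℝ} (hf : Sm f) : Sm (eucLap f) :=
  ContDiffOn.sum fun i _ => Sm.pd (Sm.pd hf i) i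

lemma SF.sLap {f : Euc n → ℝ} (hf : Sm f) : SF (sLap f) := SF.compProj hf.eucLap

lemma SF.sGrad2 {u : Euc n → ℝ} (hu : Sm u) : SF (sGrad2 u) :=
  SF.compProj (ContDiffOn.sum fun i _ => ContDiffOn.pow (Sm.pd hu i) 2)

lemma Sm.sGradPair {x v : Euc n → ℝ} (hx : Sm x) (hv : Sm v) : Sm (sGradPair x v) :=
  ContDiffOn.sum fun i _ =>
    ContDiffOn.mul (Sm.comp_sphProj (Sm.pd hx i)) (Sm.comp_sphProj (Sm.pd hv i))

lemma Sm.sDivGrad {f v : Euc n → ℝ} (hf : Sm f) (hv : Sm v) : Sm (sDivGrad f v) :=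
  ContDiffOn.sum fun i _ =>
    Sm.comp_sphProj (Sm.pd (ContDiffOn.mul hf (Sm.pd hv i)) i)

lemma SF.pd_hom {f : Euc n → ℝ} (hf : SF f) {c : ℝ} (hc : 0 < c) {y : Euc n}
    (hy : y ≠ 0) (i : Fin (n+1)) : pd i f (c • y) = c⁻¹ * pd i f y := by
  simpa [pd] using fderiv_shomog hf.sm (m := fun _ => (1:ℝ))
    (fun c hc y _ => by rw [hf.hom c hc y, one_mul]) hc hy (EuclideanSpace.single i 1)

instance : IsFiniteMeasure (sphMeasure n) :=
  inferInstanceAs (IsFiniteMeasure (volume : Measure (Euc n)).toSphere)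

lemma sphere_coe_ne_zero (ζ : Metric.sphere (0 : Euc n) 1) : (ζ : Euc n) ≠ 0 :=
  ne_zero_of_norm_one (mem_sphere_zero_iff_norm.1 ζ.2)

lemma integrable_sphere {F : Euc n → ℝ} (hF : ContinuousOn F {y : Euc n | y ≠ 0}) :
    Integrable (fun ζ : Metric.sphere (0 : Euc n) 1 => F (ζ : Euc n)) (sphMeasure n) := by
  have hc : Continuous (fun ζ : Metric.sphere (0 : Euc n) 1 => F (ζ : Euc n)) :=
    hF.comp_continuous continuous_subtype_val fun ζ => sphere_coe_ne_zero ζ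
  exact hc.integrable_of_hasCompactSupport
    (IsCompact.of_isClosed_subset isCompact_univ (isClosed_tsupport _) (subset_univ _))

lemma sGradPair_self (u : Euc n → ℝ) : sGradPair u u = sGrad2 u := by
  funext y
  exact Finset.sum_congr rfl fun i _ => (pow_two _).symm

lemma sGradPair_comm (x v : Euc n → ℝ) : sGradPair x v = sGradPair v x := by
  funext y
  exact Finset.sum_congr rfl fun i _ => mul_comm _ _

lemma sDivGrad_one (v : Euc n → ℝ) : sDivGrad (fun _ => (1:ℝ)) v = sLap v := by
  funext y
  simp only [sDivGrad, sLap, eucLap, pd]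
  refine Finset.sum_congr rfl fun i _ => ?_
  have h : (fun z : Euc n => (1:ℝ) * fderiv ℝ v z (EuclideanSpace.single i 1))
      = fun z : Euc n => fderiv ℝ v z (EuclideanSpace.single i 1) := by
    funext z; rw [one_mul]
  rw [h]
  rfl

/-- Main integration by parts identity on the round sphere. -/
lemma ibp_main {x f v : Euc n → ℝ} (hx : SF x) (hf : SF f) (hv : SF v) :
    (∫ ζ : Metric.sphere (0:Euc n) 1, x (ζ : Euc n) * sDivGrad f v (ζ : Euc n)
        ∂(sphMeasure n))
      = - ∫ ζ : Metric.sphere (0:Euc n) 1, f (ζ : Euc n) * sGradPair x v (ζ : Euc n)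
          ∂(sphMeasure n) := by
  set V : Fin (n+1) → Euc n → ℝ :=
    fun i z => x z * (f z * fderiv ℝ v z (EuclideanSpace.single i 1)) with hV
  have hsm : ∀ i, Sm (V i) := fun i =>
    ContDiffOn.mul hx.sm (ContDiffOn.mul hf.sm (Sm.pd hv.sm i))
  have hhom : ∀ i, ∀ c : ℝ, 0 < c → ∀ y : Euc n, y ≠ 0 → V i (c • y) = c⁻¹ * V i y := by
    intro i c hc y hy
    have hp := hv.pd_hom hc hy i
    simp only [hV, pd] at hp ⊢
    rw [hx.hom c hc y, hf.hom c hc y, hp]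
    ring
  have htan : ∀ y : Euc n, y ≠ 0 → ∑ i, y i * V i y = 0 := by
    intro y hy
    have he := euler_tangent hv.sm hv.hom hy
    have : ∑ i, y i * V i y = (x y * f y) * ∑ i, y i * pd i v y := by
      rw [Finset.mul_sum]
      refine Finset.sum_congr rfl fun i _ => ?_
      simp only [hV, pd]; ring
    rw [this, he, mul_zero]
  have hdiv := integral_sphere_div_eq_zero V hsm hhom htan
  have hpt : ∀ ζ : Metric.sphere (0:Euc n) 1, (∑ i, pd i (V i) (ζ : Euc n))
      = f (ζ:Euc n) * sGradPair x v (ζ:Euc n) + x (ζ:Euc n) * sDivGrad f v (ζ:Euc n) := by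
    intro ζ
    have hζ1 : ‖(ζ : Euc n)‖ = 1 := mem_sphere_zero_iff_norm.1 ζ.2
    have hζ0 : (ζ : Euc n) ≠ 0 := ne_zero_of_norm_one hζ1
    have hproj : sphProj (ζ : Euc n) = (ζ : Euc n) := sphProj_of_norm_one hζ1
    have hterm : ∀ i : Fin (n+1), pd i (V i) (ζ : Euc n)
        = pd i x (ζ:Euc n) * (f (ζ:Euc n) * pd i v (ζ:Euc n))
          + x (ζ:Euc n) * pd i (fun z => f z * pd i v z) (ζ:Euc n) := by
      intro i
      have hdx := hx.sm.differentiableAt hζ0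
      have hdb : DifferentiableAt ℝ
          (fun z => f z * fderiv ℝ v z (EuclideanSpace.single i 1)) (ζ:Euc n) :=
        Sm.differentiableAt (ContDiffOn.mul hf.sm (Sm.pd hv.sm i)) hζ0
      have hVi : V i = fun z =>
          x z * (fun z' => f z' * fderiv ℝ v z' (EuclideanSpace.single i 1)) z := rfl
      simp only [pd, hVi]
      rw [fderiv_fun_mul hdx hdb]
      simp only [ContinuousLinearMap.add_apply, ContinuousLinearMap.coe_smul',
        Pi.smul_apply, smul_eq_mul]
      ring
    rw [Finset.sum_congr rfl fun i _ => hterm i, Finset.sum_add_distrib, ← Finset.mul_sum]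
    congr 1
    · rw [sGradPair, hproj, Finset.mul_sum]
      refine Finset.sum_congr rfl fun i _ => ?_
      ring
    · rw [sDivGrad, hproj]
      rfl
  have hint1 : Integrable
      (fun ζ : Metric.sphere (0:Euc n) 1 => f (ζ:Euc n) * sGradPair x v (ζ:Euc n))
      (sphMeasure n) :=
    integrable_sphere (ContinuousOn.mul hf.sm.continuousOn
      (Sm.sGradPair hx.sm hv.sm).continuousOn)
  have hint2 : Integrable
      (fun ζ : Metric.sphere (0:Euc n) 1 => x (ζ:Euc n) * sDivGrad f v (ζ:Euc n))
      (sphMeasure n) :=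
    integrable_sphere (ContinuousOn.mul hx.sm.continuousOn
      (Sm.sDivGrad hf.sm hv.sm).continuousOn)
  rw [integral_congr_ae (Eventually.of_forall hpt), integral_add hint1 hint2] at hdiv
  linarith

/-- Integration by parts for the spherical Laplacian. -/
lemma ibp_lap {x v : Euc n → ℝ} (hx : SF x) (hv : SF v) :
    (∫ ζ : Metric.sphere (0:Euc n) 1, x (ζ : Euc n) * sLap v (ζ : Euc n) ∂(sphMeasure n))
      = - ∫ ζ : Metric.sphere (0:Euc n) 1, sGradPair x v (ζ : Euc n) ∂(sphMeasure n) := by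
  have h := ibp_main hx SF.one hv
  rw [sDivGrad_one] at h
  simpa using h

end S2
namespace S2
open MeasureTheory Metric Set Filter Function
open scoped ContDiff Topology

variable {n : ℕ}

lemma pd_sq {u : Euc n → ℝ} (hu : Sm u) {y : Euc n} (hy : y ≠ 0) (i : Fin (n+1)) :
    pd i (fun z => u z ^ 2) y = 2 * u y * pd i u y := by
  have hd := Sm.differentiableAt hu hy
  have h2 : (fun z : Euc n => u z ^ 2) = fun z => u z * u z := by
    funext z; ring
  simp only [pd, h2]
  rw [fderiv_fun_mul hd hd]
  simp only [ContinuousLinearMap.add_apply, ContinuousLinearMap.coe_smul',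
    Pi.smul_apply, smul_eq_mul]
  ring

lemma sGrad2_nonneg (u : Euc n → ℝ) (y : Euc n) : 0 ≤ sGrad2 u y :=
  Finset.sum_nonneg fun i _ => sq_nonneg _

lemma integral_combo5 {F1 F2 F3 F4 F5 : Euc n → ℝ} (c1 c2 c3 c4 c5 : ℝ)
    (h1 : ContinuousOn F1 {y : Euc n | y ≠ 0})
    (h2 : ContinuousOn F2 {y : Euc n | y ≠ 0})
    (h3 : ContinuousOn F3 {y : Euc n | y ≠ 0})
    (h4 : ContinuousOn F4 {y : Euc n | y ≠ 0})
    (h5 : ContinuousOn F5 {y : Euc n | y ≠ 0}) :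
    (∫ ζ : Metric.sphere (0:Euc n) 1,
        (c1 * F1 (ζ:Euc n) + c2 * F2 (ζ:Euc n) + c3 * F3 (ζ:Euc n)
          + c4 * F4 (ζ:Euc n) + c5 * F5 (ζ:Euc n)) ∂(sphMeasure n))
      = c1 * (∫ ζ : Metric.sphere (0:Euc n) 1, F1 (ζ:Euc n) ∂(sphMeasure n))
        + c2 * (∫ ζ : Metric.sphere (0:Euc n) 1, F2 (ζ:Euc n) ∂(sphMeasure n))
        + c3 * (∫ ζ : Metric.sphere (0:Euc n) 1, F3 (ζ:Euc n) ∂(sphMeasure n))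
        + c4 * (∫ ζ : Metric.sphere (0:Euc n) 1, F4 (ζ:Euc n) ∂(sphMeasure n))
        + c5 * (∫ ζ : Metric.sphere (0:Euc n) 1, F5 (ζ:Euc n) ∂(sphMeasure n)) := by
  have i1 := (integrable_sphere h1).const_mul c1
  have i2 := (integrable_sphere h2).const_mul c2
  have i3 := (integrable_sphere h3).const_mul c3
  have i4 := (integrable_sphere h4).const_mul c4
  have i5 := (integrable_sphere h5).const_mul c5
  have i12 : Integrable (fun ζ : Metric.sphere (0:Euc n) 1 =>
      c1 * F1 (ζ:Euc n) + c2 * F2 (ζ:Euc n)) (sphMeasure n) := i1.add i2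
  have i123 : Integrable (fun ζ : Metric.sphere (0:Euc n) 1 =>
      c1 * F1 (ζ:Euc n) + c2 * F2 (ζ:Euc n) + c3 * F3 (ζ:Euc n)) (sphMeasure n) :=
    i12.add i3
  have i1234 : Integrable (fun ζ : Metric.sphere (0:Euc n) 1 =>
      c1 * F1 (ζ:Euc n) + c2 * F2 (ζ:Euc n) + c3 * F3 (ζ:Euc n) + c4 * F4 (ζ:Euc n))
      (sphMeasure n) := i123.add i4
  rw [integral_add i1234 i5, integral_add i123 i4, integral_add i12 i3,
    integral_add i1 i2, integral_const_mul, integral_const_mul, integral_const_mul,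
    integral_const_mul, integral_const_mul]

lemma sGradPair_sq_sq {u : Euc n → ℝ} (hu : Sm u) (ζ : Metric.sphere (0:Euc n) 1) :
    sGradPair (fun z => u z ^ 2) (fun z => u z ^ 2) (ζ : Euc n)
      = 4 * (u (ζ:Euc n) ^ 2 * sGrad2 u (ζ:Euc n)) := by
  have hζ1 : ‖(ζ : Euc n)‖ = 1 := mem_sphere_zero_iff_norm.1 ζ.2
  have hζ0 : (ζ : Euc n) ≠ 0 := ne_zero_of_norm_one hζ1
  have hproj : sphProj (ζ : Euc n) = (ζ : Euc n) := sphProj_of_norm_one hζ1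
  rw [sGradPair, sGrad2, hproj, Finset.mul_sum, Finset.mul_sum]
  refine Finset.sum_congr rfl fun i _ => ?_
  rw [pd_sq hu hζ0 i]
  ring

end S2
set_option maxHeartbeats 1000000 in
open S2 MeasureTheory Metric Set Filter Function in
/-- For `n > 4` and smooth positive `u` with `σ₁(u) > 0`, the `σ₂` Dirichlet
energy is positive, and bounded below by `(n(n-1)/8)((n-4)/4)³ ∫ u⁴`. -/
theorem sigma2_energy_positive (n : ℕ) (hn : 4 < n)
    (u : Euc n → ℝ) (hu : IsSphFun u)
    (hpos : ∀ ζ : Euc n, ‖ζ‖ = 1 → 0 < u ζ)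
    (hσ : ∀ ζ : Euc n, ‖ζ‖ = 1 → 0 < sigma1 n u ζ) :
    ((n : ℝ) * ((n : ℝ) - 1) / 8) * ((((n : ℝ) - 4) / 4)) ^ 3 *
        (∫ ζ : Metric.sphere (0 : Euc n) 1, u ζ ^ 4 ∂(sphMeasure n)) ≤
      (∫ ζ : Metric.sphere (0 : Euc n) 1, u ζ * Lsigma2 n u ζ ∂(sphMeasure n)) ∧
    0 < ∫ ζ : Metric.sphere (0 : Euc n) 1, u ζ * Lsigma2 n u ζ ∂(sphMeasure n) := by
  have hn4 : (4:ℝ) < (n:ℝ) := by exact_mod_cast hn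
  have hcpos : 0 < ((n:ℝ) * ((n:ℝ)-1)/8) * ((((n:ℝ)-4)/4)) ^ 3 := by
    have h1 : 0 < (n:ℝ) * ((n:ℝ)-1)/8 := by nlinarith
    have h2 : 0 < ((((n:ℝ)-4)/4)) ^ 3 := pow_pos (by linarith) 3
    exact mul_pos h1 h2
  have hSFu : SF u := SF.of_isSphFun hu
  have hSFw : SF (fun z : Euc n => u z ^ 2) := hSFu.sq
  have hSFg : SF (sGrad2 u) := SF.sGrad2 hSFu.sm
  have hSFlw : SF (sLap fun z : Euc n => u z ^ 2) := SF.sLap hSFw.sm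
  have hSFlg : SF (sLap (sGrad2 u)) := SF.sLap hSFg.sm
  -- continuity facts
  have hcU : ContinuousOn u {y : Euc n | y ≠ 0} := hSFu.sm.continuousOn
  have hcG : ContinuousOn (sGrad2 u) {y : Euc n | y ≠ 0} := hSFg.sm.continuousOn
  have hcLw : ContinuousOn (sLap fun z : Euc n => u z ^ 2) {y : Euc n | y ≠ 0} :=
    hSFlw.sm.continuousOn
  have hcLg : ContinuousOn (sLap (sGrad2 u)) {y : Euc n | y ≠ 0} := hSFlg.sm.continuousOn
  have hcDg : ContinuousOn (sDivGrad (sGrad2 u) u) {y : Euc n | y ≠ 0} :=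
    (Sm.sDivGrad hSFg.sm hSFu.sm).continuousOn
  have hcDlw : ContinuousOn (sDivGrad (sLap fun z : Euc n => u z ^ 2) u)
      {y : Euc n | y ≠ 0} := (Sm.sDivGrad hSFlw.sm hSFu.sm).continuousOn
  have hcS1 : ContinuousOn (sigma1 n u) {y : Euc n | y ≠ 0} :=
    ContinuousOn.add
      (ContinuousOn.sub (ContinuousOn.neg (continuousOn_const.mul hcLw)) hcG)
      (continuousOn_const.mul (hcU.pow 2))
  have hF1 : ContinuousOn (fun y : Euc n => u y * sDivGrad (sGrad2 u) u y)
      {y : Euc n | y ≠ 0} := hcU.mul hcDg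
  have hF2 : ContinuousOn (fun y : Euc n => u y ^ 2 * sLap (sGrad2 u) y)
      {y : Euc n | y ≠ 0} := (hcU.pow 2).mul hcLg
  have hF3 : ContinuousOn
      (fun y : Euc n => u y * sDivGrad (sLap fun z : Euc n => u z ^ 2) u y)
      {y : Euc n | y ≠ 0} := hcU.mul hcDlw
  have hF4 : ContinuousOn (fun y : Euc n => u y ^ 2 * sLap (fun z : Euc n => u z ^ 2) y)
      {y : Euc n | y ≠ 0} := (hcU.pow 2).mul hcLw
  have hF5 : ContinuousOn (fun y : Euc n => u y ^ 4) {y : Euc n | y ≠ 0} := hcU.pow 4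
  have hFg2 : ContinuousOn (fun y : Euc n => sGrad2 u y * sGrad2 u y)
      {y : Euc n | y ≠ 0} := hcG.mul hcG
  have hFug : ContinuousOn (fun y : Euc n => u y ^ 2 * sGrad2 u y)
      {y : Euc n | y ≠ 0} := (hcU.pow 2).mul hcG
  have hFgs : ContinuousOn (fun y : Euc n => sGrad2 u y * sigma1 n u y)
      {y : Euc n | y ≠ 0} := hcG.mul hcS1
  have hFgw : ContinuousOn
      (fun y : Euc n => sGrad2 u y * sLap (fun z : Euc n => u z ^ 2) y)
      {y : Euc n | y ≠ 0} := hcG.mul hcLw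
  -- splitting of the main integral
  have hptL : ∀ ζ : Metric.sphere (0:Euc n) 1,
      u (ζ:Euc n) * Lsigma2 n u (ζ:Euc n)
        = (1/2) * (u (ζ:Euc n) * sDivGrad (sGrad2 u) u (ζ:Euc n))
          + (-(((n:ℝ)-4)/16)) * (u (ζ:Euc n) ^ 2 * sLap (sGrad2 u) (ζ:Euc n))
          + ((((n:ℝ)-4)/16))
              * (u (ζ:Euc n) * sDivGrad (sLap fun z : Euc n => u z ^ 2) u (ζ:Euc n))
          + (-((((n:ℝ)-1)/4) * ((((n:ℝ)-4)/4)) ^ 2))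
              * (u (ζ:Euc n) ^ 2 * sLap (fun z : Euc n => u z ^ 2) (ζ:Euc n))
          + (((n:ℝ) * ((n:ℝ)-1)/8) * ((((n:ℝ)-4)/4)) ^ 3) * (u (ζ:Euc n) ^ 4) := by
    intro ζ
    simp only [Lsigma2]
    ring
  have hsplit : (∫ ζ : Metric.sphere (0:Euc n) 1, u (ζ:Euc n) * Lsigma2 n u (ζ:Euc n)
        ∂(sphMeasure n))
      = (1/2) * (∫ ζ : Metric.sphere (0:Euc n) 1,
            u (ζ:Euc n) * sDivGrad (sGrad2 u) u (ζ:Euc n) ∂(sphMeasure n))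
        + (-(((n:ℝ)-4)/16)) * (∫ ζ : Metric.sphere (0:Euc n) 1,
            u (ζ:Euc n) ^ 2 * sLap (sGrad2 u) (ζ:Euc n) ∂(sphMeasure n))
        + ((((n:ℝ)-4)/16)) * (∫ ζ : Metric.sphere (0:Euc n) 1,
            u (ζ:Euc n) * sDivGrad (sLap fun z : Euc n => u z ^ 2) u (ζ:Euc n)
              ∂(sphMeasure n))
        + (-((((n:ℝ)-1)/4) * ((((n:ℝ)-4)/4)) ^ 2)) * (∫ ζ : Metric.sphere (0:Euc n) 1,
            u (ζ:Euc n) ^ 2 * sLap (fun z : Euc n => u z ^ 2) (ζ:Euc n) ∂(sphMeasure n))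
        + (((n:ℝ) * ((n:ℝ)-1)/8) * ((((n:ℝ)-4)/4)) ^ 3)
            * (∫ ζ : Metric.sphere (0:Euc n) 1, u (ζ:Euc n) ^ 4 ∂(sphMeasure n)) := by
    rw [integral_congr_ae (Eventually.of_forall hptL)]
    exact integral_combo5 _ _ _ _ _ hF1 hF2 hF3 hF4 hF5
  -- integration by parts identities
  have e1 : (∫ ζ : Metric.sphere (0:Euc n) 1,
        u (ζ:Euc n) * sDivGrad (sGrad2 u) u (ζ:Euc n) ∂(sphMeasure n))
      = - ∫ ζ : Metric.sphere (0:Euc n) 1,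
          sGrad2 u (ζ:Euc n) * sGrad2 u (ζ:Euc n) ∂(sphMeasure n) := by
    have h := ibp_main hSFu hSFg hSFu
    rw [sGradPair_self] at h
    exact h
  have e2 : (∫ ζ : Metric.sphere (0:Euc n) 1,
        u (ζ:Euc n) ^ 2 * sLap (sGrad2 u) (ζ:Euc n) ∂(sphMeasure n))
      = - ∫ ζ : Metric.sphere (0:Euc n) 1,
          sGradPair (fun z : Euc n => u z ^ 2) (sGrad2 u) (ζ:Euc n) ∂(sphMeasure n) := by
    simpa using ibp_lap hSFw hSFg
  have egw : (∫ ζ : Metric.sphere (0:Euc n) 1,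
        sGrad2 u (ζ:Euc n) * sLap (fun z : Euc n => u z ^ 2) (ζ:Euc n) ∂(sphMeasure n))
      = - ∫ ζ : Metric.sphere (0:Euc n) 1,
          sGradPair (fun z : Euc n => u z ^ 2) (sGrad2 u) (ζ:Euc n) ∂(sphMeasure n) := by
    have h := ibp_lap hSFg hSFw
    rw [sGradPair_comm] at h
    exact h
  have e3 : (∫ ζ : Metric.sphere (0:Euc n) 1,
        u (ζ:Euc n) * sDivGrad (sLap fun z : Euc n => u z ^ 2) u (ζ:Euc n)
          ∂(sphMeasure n))
      = ∫ ζ : Metric.sphere (0:Euc n) 1,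
          sGradPair (fun z : Euc n => u z ^ 2) (sGrad2 u) (ζ:Euc n) ∂(sphMeasure n) := by
    have h := ibp_main hSFu hSFlw hSFu
    rw [sGradPair_self] at h
    have hcomm : (∫ ζ : Metric.sphere (0:Euc n) 1,
          sLap (fun z : Euc n => u z ^ 2) (ζ:Euc n) * sGrad2 u (ζ:Euc n) ∂(sphMeasure n))
        = ∫ ζ : Metric.sphere (0:Euc n) 1,
            sGrad2 u (ζ:Euc n) * sLap (fun z : Euc n => u z ^ 2) (ζ:Euc n)
              ∂(sphMeasure n) :=
      integral_congr_ae (Eventually.of_forall fun ζ => mul_comm _ _)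
    rw [hcomm, egw] at h
    linarith [h]
  have e4 : (∫ ζ : Metric.sphere (0:Euc n) 1,
        u (ζ:Euc n) ^ 2 * sLap (fun z : Euc n => u z ^ 2) (ζ:Euc n) ∂(sphMeasure n))
      = -(4 * ∫ ζ : Metric.sphere (0:Euc n) 1,
            u (ζ:Euc n) ^ 2 * sGrad2 u (ζ:Euc n) ∂(sphMeasure n)) := by
    have h := ibp_lap hSFw hSFw
    have h2 : (∫ ζ : Metric.sphere (0:Euc n) 1,
          sGradPair (fun z : Euc n => u z ^ 2) (fun z : Euc n => u z ^ 2) (ζ:Euc n)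
            ∂(sphMeasure n))
        = ∫ ζ : Metric.sphere (0:Euc n) 1,
            4 * (u (ζ:Euc n) ^ 2 * sGrad2 u (ζ:Euc n)) ∂(sphMeasure n) :=
      integral_congr_ae (Eventually.of_forall fun ζ => sGradPair_sq_sq hSFu.sm ζ)
    rw [h2, integral_const_mul] at h
    simpa using h
  -- expansion of ∫ g σ₁
  have hptS : ∀ ζ : Metric.sphere (0:Euc n) 1,
      sGrad2 u (ζ:Euc n) * sigma1 n u (ζ:Euc n)
        = (-(((n:ℝ)-4)/8))
            * (sGrad2 u (ζ:Euc n) * sLap (fun z : Euc n => u z ^ 2) (ζ:Euc n))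
          + (-1) * (sGrad2 u (ζ:Euc n) * sGrad2 u (ζ:Euc n))
          + (((n:ℝ)/2) * ((((n:ℝ)-4)/4)) ^ 2) * (u (ζ:Euc n) ^ 2 * sGrad2 u (ζ:Euc n))
          + 0 * (u (ζ:Euc n) ^ 4) + 0 * (u (ζ:Euc n) ^ 4) := by
    intro ζ
    simp only [sigma1]
    ring
  have esig : (∫ ζ : Metric.sphere (0:Euc n) 1,
        sGrad2 u (ζ:Euc n) * sigma1 n u (ζ:Euc n) ∂(sphMeasure n))
      = (-(((n:ℝ)-4)/8)) * (∫ ζ : Metric.sphere (0:Euc n) 1,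
            sGrad2 u (ζ:Euc n) * sLap (fun z : Euc n => u z ^ 2) (ζ:Euc n)
              ∂(sphMeasure n))
        + (-1) * (∫ ζ : Metric.sphere (0:Euc n) 1,
            sGrad2 u (ζ:Euc n) * sGrad2 u (ζ:Euc n) ∂(sphMeasure n))
        + (((n:ℝ)/2) * ((((n:ℝ)-4)/4)) ^ 2) * (∫ ζ : Metric.sphere (0:Euc n) 1,
            u (ζ:Euc n) ^ 2 * sGrad2 u (ζ:Euc n) ∂(sphMeasure n))
        + 0 * (∫ ζ : Metric.sphere (0:Euc n) 1, u (ζ:Euc n) ^ 4 ∂(sphMeasure n))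
        + 0 * (∫ ζ : Metric.sphere (0:Euc n) 1, u (ζ:Euc n) ^ 4 ∂(sphMeasure n)) := by
    rw [integral_congr_ae (Eventually.of_forall hptS)]
    exact integral_combo5 _ _ _ _ _ hFgw hFg2 hFug hF5 hF5
  -- the nonnegative quantity
  have hq0 : 0 ≤ ∫ ζ : Metric.sphere (0:Euc n) 1,
      (1 * (sGrad2 u (ζ:Euc n) * sigma1 n u (ζ:Euc n))
        + (1/2) * (sGrad2 u (ζ:Euc n) * sGrad2 u (ζ:Euc n))
        + ((((n:ℝ)-2)/2) * ((((n:ℝ)-4)/4)) ^ 2) * (u (ζ:Euc n) ^ 2 * sGrad2 u (ζ:Euc n))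
        + 0 * (u (ζ:Euc n) ^ 4) + 0 * (u (ζ:Euc n) ^ 4)) ∂(sphMeasure n) := by
    refine integral_nonneg fun ζ => ?_
    rw [Pi.zero_apply]
    have hζ1 : ‖(ζ : Euc n)‖ = 1 := mem_sphere_zero_iff_norm.1 ζ.2
    have hg0 := sGrad2_nonneg u (ζ : Euc n)
    have hs0 := (hσ _ hζ1).le
    have hu0 : (0:ℝ) ≤ u (ζ:Euc n) ^ 2 := sq_nonneg _
    have hc0 : (0:ℝ) ≤ (((n:ℝ)-2)/2) * ((((n:ℝ)-4)/4)) ^ 2 :=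
      mul_nonneg (by linarith) (by positivity)
    have t1 : (0:ℝ) ≤ sGrad2 u (ζ:Euc n) * sigma1 n u (ζ:Euc n) := mul_nonneg hg0 hs0
    have t2 : (0:ℝ) ≤ sGrad2 u (ζ:Euc n) * sGrad2 u (ζ:Euc n) := mul_nonneg hg0 hg0
    have t3 : (0:ℝ) ≤ u (ζ:Euc n) ^ 2 * sGrad2 u (ζ:Euc n) := mul_nonneg hu0 hg0
    have t4 := mul_nonneg hc0 t3
    linarith [t1, t2, t4]
  have hqsplit : (∫ ζ : Metric.sphere (0:Euc n) 1,
        (1 * (sGrad2 u (ζ:Euc n) * sigma1 n u (ζ:Euc n))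
          + (1/2) * (sGrad2 u (ζ:Euc n) * sGrad2 u (ζ:Euc n))
          + ((((n:ℝ)-2)/2) * ((((n:ℝ)-4)/4)) ^ 2)
              * (u (ζ:Euc n) ^ 2 * sGrad2 u (ζ:Euc n))
          + 0 * (u (ζ:Euc n) ^ 4) + 0 * (u (ζ:Euc n) ^ 4)) ∂(sphMeasure n))
      = 1 * (∫ ζ : Metric.sphere (0:Euc n) 1,
            sGrad2 u (ζ:Euc n) * sigma1 n u (ζ:Euc n) ∂(sphMeasure n))
        + (1/2) * (∫ ζ : Metric.sphere (0:Euc n) 1,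
            sGrad2 u (ζ:Euc n) * sGrad2 u (ζ:Euc n) ∂(sphMeasure n))
        + ((((n:ℝ)-2)/2) * ((((n:ℝ)-4)/4)) ^ 2) * (∫ ζ : Metric.sphere (0:Euc n) 1,
            u (ζ:Euc n) ^ 2 * sGrad2 u (ζ:Euc n) ∂(sphMeasure n))
        + 0 * (∫ ζ : Metric.sphere (0:Euc n) 1, u (ζ:Euc n) ^ 4 ∂(sphMeasure n))
        + 0 * (∫ ζ : Metric.sphere (0:Euc n) 1, u (ζ:Euc n) ^ 4 ∂(sphMeasure n)) :=
    integral_combo5 _ _ _ _ _ hFgs hFg2 hFug hF5 hF5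
  -- combine everything
  rw [e1, e2, e3, e4] at hsplit
  rw [egw] at esig
  rw [esig] at hqsplit
  rw [hqsplit] at hq0
  have hJu : 0 < ∫ ζ : Metric.sphere (0:Euc n) 1, u (ζ:Euc n) ^ 4 ∂(sphMeasure n) := by
    have hint : Integrable (fun ζ : Metric.sphere (0:Euc n) 1 => u (ζ:Euc n) ^ 4)
        (sphMeasure n) := integrable_sphere hF5
    have hnn : 0 ≤ fun ζ : Metric.sphere (0:Euc n) 1 => u (ζ:Euc n) ^ 4 := by
      intro ζ
      exact pow_nonneg (hpos _ (mem_sphere_zero_iff_norm.1 ζ.2)).le 4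
    rw [integral_pos_iff_support_of_nonneg hnn hint]
    have hsupp : Function.support (fun ζ : Metric.sphere (0:Euc n) 1 => u (ζ:Euc n) ^ 4)
        = Set.univ :=
      Set.eq_univ_of_forall fun ζ =>
        pow_ne_zero 4 (hpos _ (mem_sphere_zero_iff_norm.1 ζ.2)).ne'
    rw [hsupp]
    have hms : sphMeasure n Set.univ
        = (Module.finrank ℝ (Euc n)) * volume (Metric.ball (0:Euc n) 1) :=
      Measure.toSphere_apply_univ _
    rw [hms]
    refine ENNReal.mul_pos ?_ ?_
    · simp [finrank_euclideanSpace_fin]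
    · exact (measure_ball_pos _ _ one_pos).ne'
  constructor
  · rw [hsplit]
    nlinarith [hq0]
  · rw [hsplit]
    nlinarith [hq0, mul_pos hcpos hJu]
end
end
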